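/- arXiv:2104.02148 — 6 statements merged into one kernel-verified Lean document; each statement's English description precedes it below -/
import Mathlib

section
/- Let F be a finite nonempty family of convex sets in ℝ³ such that any two members of F intersect. Then there exists a two-dimensional affine plane in ℝ³ that intersects every member of F. -/
/-!
Project everything onto a line by a nonzero linear functional `f`. The images are pairwise
intersecting convex subsets of `ℝ`, so by Helly's theorem in dimension one they share a point `c`,
and the level plane `f = c` then meets every member of the family.
-/

open scoped RealInnerProductSpace
open Finset

theorem Finset.biInter_nonempty_of_card_le_two {ι α : Type*} [Nonempty α] {F : ι → Set α}
    {I : Finset ι}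
    (hpair : ∀ i ∈ I, ∀ j ∈ I, (F i ∩ F j).Nonempty) (hI : #I ≤ 2) :
    (⋂ i ∈ I, F i).Nonempty := by
  classical
  obtain h | h | h : #I = 0 ∨ #I = 1 ∨ #I = 2 := by omega
  · simp [card_eq_zero.mp h]
  · obtain ⟨i, rfl⟩ := card_eq_one.mp h
    simpa using hpair i (mem_singleton_self i) i (mem_singleton_self i)
  · obtain ⟨i, j, -, rfl⟩ := card_eq_two.mp h
    simpa using hpair i (by simp) j (by simp)

theorem Real.helly_theorem_pairwise {ι : Type*} {F : ι → Set ℝ} {s : Finset ι}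
    (h_convex : ∀ i ∈ s, Convex ℝ (F i))
    (h_pair : ∀ i ∈ s, ∀ j ∈ s, (F i ∩ F j).Nonempty) :
    (⋂ i ∈ s, F i).Nonempty :=
  Convex.helly_theorem' h_convex fun I hIs hI =>
    I.biInter_nonempty_of_card_le_two (fun i hi j hj => h_pair i (hIs hi) j (hIs hj))
      (by simpa using hI)

theorem LinearMap.exists_level_set_inter_nonempty {E ι : Type*} [AddCommGroup E] [Module ℝ E]
    (f : E →ₗ[ℝ] ℝ) {F : ι → Set E} {s : Finset ι}
    (h_convex : ∀ i ∈ s, Convex ℝ (F i))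
    (h_pair : ∀ i ∈ s, ∀ j ∈ s, (F i ∩ F j).Nonempty) :
    ∃ c, ∀ i ∈ s, (f ⁻¹' {c} ∩ F i).Nonempty := by
  obtain ⟨c, hc⟩ := Real.helly_theorem_pairwise (F := fun i => f '' F i)
    (fun i hi => (h_convex i hi).linear_image f)
    (fun i hi j hj => (h_pair i hi j hj).image f |>.mono (Set.image_inter_subset f _ _))
  refine ⟨c, fun i hi => ?_⟩
  obtain ⟨x, hx, rfl⟩ := Set.mem_iInter₂.mp hc i hi
  exact ⟨x, rfl, hx⟩

theorem pairwise_intersecting_convex_plane_transversal_general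
    (F : Finset (Set (EuclideanSpace ℝ (Fin 3))))
    (hconv : ∀ A ∈ F, Convex ℝ A)
    (hpair : ∀ A ∈ F, ∀ B ∈ F, (A ∩ B).Nonempty) :
    ∃ (u : EuclideanSpace ℝ (Fin 3)) (c : ℝ), u ≠ 0 ∧
      ∀ A ∈ F, ({x : EuclideanSpace ℝ (Fin 3) | ⟪x, u⟫ = c} ∩ A).Nonempty := by
  obtain ⟨u, hu⟩ := exists_ne (0 : EuclideanSpace ℝ (Fin 3))
  obtain ⟨c, hc⟩ := (innerₛₗ ℝ u).exists_level_set_inter_nonempty (F := id) hconv hpair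
  refine ⟨u, c, hu, fun A hA => ?_⟩
  obtain ⟨x, hxc, hxA⟩ := hc A hA
  exact ⟨x, by simpa [real_inner_comm] using hxc, hxA⟩

/-- A finite nonempty family of pairwise intersecting convex sets in ℝ³
admits a two-dimensional plane (given by a nonzero normal vector `u` and level `c`)
meeting every member. -/
theorem pairwise_intersecting_convex_plane_transversal
    (F : Finset (Set (EuclideanSpace ℝ (Fin 3))))
    (hne : F.Nonempty)
    (hconv : ∀ A ∈ F, Convex ℝ A)
    (hpair : ∀ A ∈ F, ∀ B ∈ F, (A ∩ B).Nonempty) :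
    ∃ (u : EuclideanSpace ℝ (Fin 3)) (c : ℝ), u ≠ 0 ∧
      ∀ A ∈ F, ({x : EuclideanSpace ℝ (Fin 3) | ⟪x, u⟫ = c} ∩ A).Nonempty :=
  pairwise_intersecting_convex_plane_transversal_general F hconv hpair
end

section
/- Let K be a compact convex set in the plane of width exactly 1. Then there exists a set T of at most 12 points in the plane such that every closed slab S of width at least 1 satisfying S ∩ K ≠ ∅ and S \ K connected contains a point of T. -/
open scoped RealInnerProductSpace

/-- A closed slab in the plane of width `w`, given by a unit normal `u`. -/
def IsSlab (S : Set (EuclideanSpace ℝ (Fin 2))) (w : ℝ) : Prop :=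
  ∃ (u : EuclideanSpace ℝ (Fin 2)) (a : ℝ), ‖u‖ = 1 ∧
    S = {x : EuclideanSpace ℝ (Fin 2) | a ≤ ⟪x, u⟫ ∧ ⟪x, u⟫ ≤ a + w}

/-!
Six points suffice. Put `K` in a slab `a₀ ≤ ⟪x, u₀⟫ ≤ a₀ + 1` and let `pa`, `pb ∈ K` be extreme
in the direction orthogonal to `u₀`; take `pa`, `pb` and the four corners of the bounding
rectangle, obtained by sliding `pa`, `pb` along `u₀` onto the two boundary lines.

A slab `S` that meets `K` without crossing it has all of `K` on one side of one of its boundary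
lines, say below the upper one after flipping the normal: otherwise a segment of `K` joins the
two outer half-planes, and the sign of the area form relative to that segment separates the two
far ends of `S \ K`. The rectangle corner `c` maximizing the normal coordinate then lies above
the lower line of `S`; the point `z ∈ {pa, pb}` on the same side of the rectangle lies in `K`,
hence below the upper line, and differs from `c` by at most `1` along `u₀`. As `S` has width at
least `1`, one of `c`, `z` lies in `S`.
-/

open Module Set

section Slab

variable {E : Type*} [NormedAddCommGroup E] [InnerProductSpace ℝ E]

/-- The slab `slab u a b` has width `(b - a) / ‖u‖`. -/
def slab (u : E) (a b : ℝ) : Set E := {x | ⟪x, u⟫ ∈ Icc a b}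

theorem slab_neg (u : E) (a b : ℝ) : slab (-u) (-b) (-a) = slab u a b := by
  ext x
  simp only [slab, mem_ofPred_eq, mem_Icc, inner_neg_right, neg_le_neg_iff, and_comm]

end Slab

theorem exists_mem_pair_forall_mul_le {ι : Type*} {f : ι → ℝ} {s : Set ι} {i j : ι}
    (hi : IsMinOn f s i) (hj : IsMaxOn f s j) (c : ℝ) :
    ∃ k ∈ ({i, j} : Set ι), ∀ x ∈ s, f x * c ≤ f k * c := by
  rcases le_or_gt 0 c with hc | hc
  · exact ⟨j, by simp, fun x hx => mul_le_mul_of_nonneg_right (hj hx) hc⟩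
  · exact ⟨i, by simp, fun x hx => mul_le_mul_of_nonpos_right (hi hx) hc.le⟩

namespace Orientation

variable {E : Type*} [NormedAddCommGroup E] [InnerProductSpace ℝ E] [Fact (finrank ℝ E = 2)]
  (o : Orientation ℝ E (Fin 2))

local notation "ω" => o.areaForm
local notation "J" => o.rightAngleRotation

theorem norm_sq_smul_eq_inner_smul_add_areaForm_smul (a x : E) :
    ‖a‖ ^ 2 • x = ⟪a, x⟫ • a + ω a x • J a := by
  refine ext_inner_right ℝ fun y => ?_
  rw [real_inner_smul_left, inner_add_left, real_inner_smul_left, real_inner_smul_left,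
    o.inner_rightAngleRotation_left, ← o.inner_mul_inner_add_areaForm_mul_areaForm,
    real_inner_comm]

theorem exists_smul_eq_of_areaForm_eq_zero {d y : E} (hd : d ≠ 0) (h : ω d y = 0) :
    ∃ t : ℝ, t • d = y := by
  have hd2 : ‖d‖ ^ 2 ≠ 0 := by positivity
  refine ⟨⟪d, y⟫ / ‖d‖ ^ 2, ?_⟩
  have := o.norm_sq_smul_eq_inner_smul_add_areaForm_smul d y
  rw [h, zero_smul, add_zero] at this
  rw [div_eq_inv_mul, mul_smul, ← this, smul_smul, inv_mul_cancel₀ hd2, one_smul]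

theorem mem_segment_of_areaForm_eq_zero {k₁ k₂ x u : E} (h : ω (k₂ - k₁) (x - k₁) = 0)
    (hk : ⟪k₁, u⟫ < ⟪k₂, u⟫) (h₁ : ⟪k₁, u⟫ ≤ ⟪x, u⟫) (h₂ : ⟪x, u⟫ ≤ ⟪k₂, u⟫) :
    x ∈ segment ℝ k₁ k₂ := by
  have hd : k₂ - k₁ ≠ 0 := fun h0 => by simp [sub_eq_zero.mp h0] at hk
  obtain ⟨t, ht⟩ := o.exists_smul_eq_of_areaForm_eq_zero hd h
  have hxu : ⟪x, u⟫ = ⟪k₁, u⟫ + t * (⟪k₂, u⟫ - ⟪k₁, u⟫) := by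
    rw [← inner_sub_left, ← real_inner_smul_left, ht, inner_sub_left]; ring
  rw [segment_eq_image']
  refine ⟨t, ⟨?_, ?_⟩, show k₁ + t • (k₂ - k₁) = x by rw [ht]; abel⟩
  · nlinarith
  · nlinarith

theorem exists_inner_eq_and_areaForm_eq {d u : E} (hdu : ⟪d, u⟫ ≠ 0) (s t : ℝ) :
    ∃ x : E, ⟪x, u⟫ = s ∧ ω d x = t := by
  refine ⟨(s / ⟪d, u⟫) • d + (t / ⟪d, u⟫) • J u, ?_, ?_⟩
  · rw [inner_add_left, real_inner_smul_left, real_inner_smul_left,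
      o.inner_rightAngleRotation_self, mul_zero, add_zero]
    field_simp
  · rw [map_add, map_smul, map_smul, o.areaForm_apply_self, o.areaForm_rightAngleRotation_right,
      smul_eq_mul, smul_eq_mul, mul_zero, zero_add]
    field_simp

variable {K : Set E} {u₀ pa pb : E} {a₀ b₀ : ℝ}

theorem exists_corner_forall_inner_le (hu₀ : ‖u₀‖ = 1) (hK : K ⊆ slab u₀ a₀ b₀)
    (hpa : IsMinOn (ω u₀) K pa) (hpb : IsMaxOn (ω u₀) K pb) (u : E) :
    ∃ z ∈ ({pa, pb} : Set E), ∃ r ∈ ({a₀, b₀} : Set ℝ),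
      ∀ x ∈ K, ⟪x, u⟫ ≤ ⟪z + (r - ⟪z, u₀⟫) • u₀, u⟫ := by
  have hdecomp : ∀ x, ⟪x, u⟫ = ⟪x, u₀⟫ * ⟪u₀, u⟫ + ω u₀ x * ω u₀ u := fun x => by
    rw [real_inner_comm u₀ x, o.inner_mul_inner_add_areaForm_mul_areaForm, hu₀, one_pow, one_mul]
  obtain ⟨z, hz, hz_max⟩ := exists_mem_pair_forall_mul_le hpa hpb (ω u₀ u)
  obtain ⟨r, hr, hr_max⟩ := exists_mem_pair_forall_mul_le (f := id) (s := Icc a₀ b₀)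
    (isMinOn_iff.mpr fun _ hx => hx.1) (isMaxOn_iff.mpr fun _ hx => hx.2) ⟪u₀, u⟫
  refine ⟨z, hz, r, hr, fun x hx => ?_⟩
  have hc : ⟪z + (r - ⟪z, u₀⟫) • u₀, u⟫ = r * ⟪u₀, u⟫ + ω u₀ z * ω u₀ u := by
    rw [hdecomp, inner_add_left, real_inner_smul_left, real_inner_self_eq_norm_sq, hu₀, map_add,
      map_smul, o.areaForm_apply_self, smul_zero, add_zero]
    ring
  have hr_x : ⟪x, u₀⟫ * ⟪u₀, u⟫ ≤ r * ⟪u₀, u⟫ := hr_max _ (hK hx)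
  rw [hdecomp x, hc]
  linarith [hz_max x hx]

theorem exists_corner_or_mem_slab (hu₀ : ‖u₀‖ = 1) (hK : K ⊆ slab u₀ a₀ b₀)
    (hpaK : pa ∈ K) (hpbK : pb ∈ K) (hpa : IsMinOn (ω u₀) K pa) (hpb : IsMaxOn (ω u₀) K pb)
    {u x : E} {a b : ℝ} (hw : ‖u‖ * (b₀ - a₀) ≤ b - a) (hxK : x ∈ K) (hxa : a ≤ ⟪x, u⟫)
    (hKb : ∀ y ∈ K, ⟪y, u⟫ ≤ b) :
    ∃ z ∈ ({pa, pb} : Set E), ∃ r ∈ ({a₀, b₀} : Set ℝ),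
      z + (r - ⟪z, u₀⟫) • u₀ ∈ slab u a b ∨ z ∈ slab u a b := by
  obtain ⟨z, hz, r, hr, hc_max⟩ := o.exists_corner_forall_inner_le hu₀ hK hpa hpb u
  have hzK : z ∈ K := by rcases hz with rfl | rfl <;> assumption
  obtain ⟨hz₁, hz₂⟩ := hK hzK
  have hr_dist : |r - ⟪z, u₀⟫| ≤ b₀ - a₀ := by
    rw [abs_le]
    rcases hr with rfl | rfl <;> constructor <;> linarith
  have hcz : ⟪z + (r - ⟪z, u₀⟫) • u₀, u⟫ - ⟪z, u⟫ ≤ b - a :=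
    calc ⟪z + (r - ⟪z, u₀⟫) • u₀, u⟫ - ⟪z, u⟫ = (r - ⟪z, u₀⟫) * ⟪u₀, u⟫ := by
          rw [inner_add_left, real_inner_smul_left]; ring
      _ ≤ |r - ⟪z, u₀⟫| * |⟪u₀, u⟫| := by rw [← abs_mul]; exact le_abs_self _
      _ ≤ (b₀ - a₀) * ‖u‖ := by
          refine mul_le_mul hr_dist ?_ (abs_nonneg _) (by linarith)
          simpa [hu₀] using abs_real_inner_le_norm u₀ u
      _ ≤ b - a := by linarith
  refine ⟨z, hz, r, hr, ?_⟩
  by_cases hcb : ⟪z + (r - ⟪z, u₀⟫) • u₀, u⟫ ≤ b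
  · exact Or.inl ⟨hxa.trans (hc_max x hxK), hcb⟩
  · exact Or.inr ⟨by linarith, hKb z hzK⟩

end Orientation

section Plane

variable {E : Type*} [NormedAddCommGroup E] [InnerProductSpace ℝ E] [Fact (finrank ℝ E = 2)]

attribute [local instance] FiniteDimensional.of_fact_finrank_eq_two

theorem not_isPreconnected_slab_diff {K : Set E} (hK : IsCompact K) (hKconv : Convex ℝ K)
    {u k₁ k₂ : E} {a b : ℝ} (hab : a ≤ b) (hk₁ : k₁ ∈ K) (hk₂ : k₂ ∈ K)
    (h₁ : ⟪k₁, u⟫ < a) (h₂ : b < ⟪k₂, u⟫) : ¬IsPreconnected (slab u a b \ K) := by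
  intro hconn
  let o : Orientation ℝ E (Fin 2) := (finBasisOfFinrankEq ℝ E Fact.out).orientation
  set d := k₂ - k₁
  set φ : E → ℝ := fun x => o.areaForm d (x - k₁)
  have hdu : 0 < ⟪d, u⟫ := by rw [inner_sub_left]; linarith
  have hφ : Continuous φ := (o.areaForm' d).continuous.comp (continuous_sub_right k₁)
  -- `φ` vanishes on the line through `k₁` and `k₂`, whose part inside the slab lies in `K`
  have hφ_zero : ∀ x ∈ slab u a b, φ x = 0 → x ∈ K := fun x hx h0 =>
    hKconv.segment_subset hk₁ hk₂ (o.mem_segment_of_areaForm_eq_zero h0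
      (by linarith [hx.1, hx.2]) (by linarith [hx.1]) (by linarith [hx.2]))
  obtain ⟨M, hM⟩ := hK.exists_bound_of_continuousOn hφ.continuousOn
  have hM0 : 0 ≤ M := (norm_nonneg _).trans (hM k₁ hk₁)
  have hfar : ∀ R : ℝ, M < |R| → ∃ y ∈ slab u a b \ K, φ y = R := fun R hR => by
    obtain ⟨x, hxu, hxω⟩ := o.exists_inner_eq_and_areaForm_eq hdu.ne' (a - ⟪k₁, u⟫) R
    have hφx : φ (k₁ + x) = R := by simp only [φ, add_sub_cancel_left, hxω]
    refine ⟨k₁ + x, ⟨?_, fun hK' => ?_⟩, hφx⟩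
    · simp [slab, inner_add_left, hxu, hab]
    · have := hM _ hK'
      rw [hφx, Real.norm_eq_abs] at this
      linarith
  obtain ⟨y₁, hy₁, hφ₁⟩ := hfar (-(M + 1)) (by rw [abs_neg, abs_of_pos (by linarith)]; linarith)
  obtain ⟨y₂, hy₂, hφ₂⟩ := hfar (M + 1) (by rw [abs_of_pos (by linarith)]; linarith)
  obtain ⟨x, ⟨hxS, hxK⟩, hx0⟩ := hconn.intermediate_value hy₁ hy₂ hφ.continuousOn
    (show (0 : ℝ) ∈ Icc (φ y₁) (φ y₂) by rw [hφ₁, hφ₂]; constructor <;> linarith)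
  exact hxK (hφ_zero x hxS hx0)

theorem forall_inner_le_or_forall_le_inner_of_isPreconnected_slab_diff {K : Set E}
    (hK : IsCompact K) (hKconv : Convex ℝ K) {u : E} {a b : ℝ} (hab : a ≤ b)
    (hconn : IsPreconnected (slab u a b \ K)) :
    (∀ y ∈ K, ⟪y, u⟫ ≤ b) ∨ ∀ y ∈ K, a ≤ ⟪y, u⟫ := by
  by_contra! h
  obtain ⟨⟨k₂, hk₂, h₂⟩, ⟨k₁, hk₁, h₁⟩⟩ := h
  exact not_isPreconnected_slab_diff hK hKconv hab hk₁ hk₂ h₁ h₂ hconn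

theorem exists_six_points_pierce_noncrossing_slabs {K : Set E} (hK : IsCompact K)
    (hKconv : Convex ℝ K) (hKne : K.Nonempty) {u₀ : E} (hu₀ : ‖u₀‖ = 1) {a₀ b₀ : ℝ}
    (hK₀ : K ⊆ slab u₀ a₀ b₀) :
    ∃ T : Finset E, T.card ≤ 6 ∧ ∀ u a b, ‖u‖ * (b₀ - a₀) ≤ b - a →
      (slab u a b ∩ K).Nonempty → IsPreconnected (slab u a b \ K) → ∃ t ∈ T, t ∈ slab u a b := by
  classical
  let o : Orientation ℝ E (Fin 2) := (finBasisOfFinrankEq ℝ E Fact.out).orientation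
  obtain ⟨pa, hpaK, hpa⟩ := hK.exists_isMinOn hKne (o.areaForm' u₀).continuous.continuousOn
  obtain ⟨pb, hpbK, hpb⟩ := hK.exists_isMaxOn hKne (o.areaForm' u₀).continuous.continuousOn
  let c (z : E) (r : ℝ) : E := z + (r - ⟪z, u₀⟫) • u₀
  let T : Finset E := {c pa a₀, c pa b₀, c pb a₀, c pb b₀, pa, pb}
  have hT : ∀ u a b, ‖u‖ * (b₀ - a₀) ≤ b - a → ∀ x ∈ K, a ≤ ⟪x, u⟫ →
      (∀ y ∈ K, ⟪y, u⟫ ≤ b) → ∃ t ∈ T, t ∈ slab u a b := fun u a b hw x hxK hxa hKb => by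
    obtain ⟨z, hz, r, hr, h | h⟩ :=
      o.exists_corner_or_mem_slab hu₀ hK₀ hpaK hpbK hpa hpb hw hxK hxa hKb
    · refine ⟨c z r, ?_, h⟩
      rcases hz with rfl | rfl <;> rcases hr with rfl | rfl <;> simp [T]
    · exact ⟨z, by rcases hz with rfl | rfl <;> simp [T], h⟩
  refine ⟨T, Finset.card_le_six, fun u a b hw ⟨x, hxS, hxK⟩ hconn => ?_⟩
  rcases forall_inner_le_or_forall_le_inner_of_isPreconnected_slab_diff hK hKconv
    (hxS.1.trans hxS.2) hconn with hKb | hKa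
  · exact hT u a b hw x hxK hxS.1 hKb
  · rw [← slab_neg]
    refine hT (-u) (-b) (-a) (by rwa [norm_neg, neg_sub_neg]) x hxK ?_ fun y hy => ?_
    · rw [inner_neg_right]; linarith [hxS.2]
    · rw [inner_neg_right]; linarith [hKa y hy]

end Plane

theorem twelve_points_pierce_noncrossing_slabs_general
    (K : Set (EuclideanSpace ℝ (Fin 2)))
    (hKc : IsCompact K) (hKconv : Convex ℝ K) (hKne : K.Nonempty)
    (hwidth₁ : ∃ S, IsSlab S 1 ∧ K ⊆ S) :
    ∃ T : Finset (EuclideanSpace ℝ (Fin 2)), T.card ≤ 12 ∧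
      ∀ S w, IsSlab S w → 1 ≤ w → (S ∩ K).Nonempty → IsPreconnected (S \ K) →
        ∃ t ∈ T, t ∈ S := by
  have : Fact (finrank ℝ (EuclideanSpace ℝ (Fin 2)) = 2) := ⟨finrank_euclideanSpace_fin⟩
  obtain ⟨S₀, ⟨u₀, a₀, hu₀, rfl⟩, hKS₀⟩ := hwidth₁
  obtain ⟨T, hT, hpierce⟩ :=
    exists_six_points_pierce_noncrossing_slabs hKc hKconv hKne hu₀ (b₀ := a₀ + 1) hKS₀
  refine ⟨T, hT.trans (by norm_num), ?_⟩
  rintro S w ⟨u, a, hu, rfl⟩ hw hSK hconn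
  exact hpierce u a (a + w) (by rw [hu]; linarith) hSK hconn

/-- For a compact convex planar set `K` of width exactly 1, there are at most 12
points meeting every slab of width at least 1 that intersects but does not cross `K`. -/
theorem twelve_points_pierce_noncrossing_slabs
    (K : Set (EuclideanSpace ℝ (Fin 2)))
    (hKc : IsCompact K) (hKconv : Convex ℝ K) (hKne : K.Nonempty)
    (hwidth₁ : ∃ S, IsSlab S 1 ∧ K ⊆ S)
    (hwidth₂ : ∀ S w, IsSlab S w → K ⊆ S → 1 ≤ w) :
    ∃ T : Finset (EuclideanSpace ℝ (Fin 2)), T.card ≤ 12 ∧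
      ∀ S w, IsSlab S w → 1 ≤ w → (S ∩ K).Nonempty → IsPreconnected (S \ K) →
        ∃ t ∈ T, t ∈ S :=
  twelve_points_pierce_noncrossing_slabs_general K hKc hKconv hKne hwidth₁
end

section
/- Let K be a compact convex set in the plane, and let S be a closed slab such that S ∩ K ≠ ∅ and S \ K is connected. If the width of S is at least the width of K, and S contains none of the four extreme points a, b, c, d of K (the two points where a minimal-width slab's middle line meets the boundary of K, and the two extreme points of K in the direction of that middle line), then S intersects the boundary of K in a subset of one of the four boundary arcs determined by a, b, c, d. -/
open scoped RealInnerProductSpace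

/-!
Write the slab as `β ≤ ⟪x, v⟫ ≤ γ` and let `y ∈ K` lie outside it, say `⟪y, v⟫ < β`.
If `K` also had a point `q` with `⟪q, v⟫ > γ`, the segment `[y, q] ⊆ K` would cut the slab
into two pieces, each containing far-away points of the line `⟪x, v⟫ = β`; so `S \ K` would be
disconnected. Hence `S ∩ ∂K` is the cap `∂K ∩ {⟪x, v⟫ ≥ β}`. Slicing `K` by the lines
`⟪x, v⟫ = t`, a boundary point of `K` strictly between the levels of `y` and of the top face
is an end point of its slice, so the cap is the top face together with the graphs of the
upper and lower end points over `[β, top)`. The upper end `sliceSup` is concave in `t`, hence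
continuous on that interval, and each graph accumulates at the top face; so the cap is
connected, and it avoids `a, b, c, d` because they lie outside `S`.
-/

open Set Filter Topology Module

theorem IsPreconnected.union_of_mem_closure {X : Type*} [TopologicalSpace X] {A B : Set X}
    {p : X} (hA : IsPreconnected A) (hB : IsPreconnected B) (hpA : p ∈ closure A)
    (hpB : p ∈ B) : IsPreconnected (A ∪ B) := by
  have hpA' : IsPreconnected (insert p A) :=
    hA.subset_closure (subset_insert p A) (insert_subset hpA subset_closure)
  simpa [insert_union, insert_eq_of_mem (mem_union_right A hpB)] using
    hpA'.union p (mem_insert p A) hpB hB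

section InnerProductSpace

variable {E : Type*} [NormedAddCommGroup E] [InnerProductSpace ℝ E]

theorem mem_frontier_of_forall_add_smul_notMem {K : Set E} {x w : E} (hx : x ∈ K)
    (h : ∀ t : ℝ, 0 < t → x + t • w ∉ K) : x ∈ frontier K := by
  refine ⟨subset_closure hx, fun hint => ?_⟩
  have hlim : Tendsto (fun t : ℝ => x + t • w) (𝓝[>] 0) (𝓝 x) := by
    have : Continuous fun t : ℝ => x + t • w := by fun_prop
    simpa using (this.tendsto 0).mono_left nhdsWithin_le_nhds
  obtain ⟨t, htK, ht⟩ :=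
    ((hlim.eventually (mem_interior_iff_mem_nhds.1 hint)).and self_mem_nhdsWithin).exists
  exact h t ht htK

theorem Convex.Icc_inner_subset_image {K : Set E} (hK : Convex ℝ K) {p q : E} (hp : p ∈ K)
    (hq : q ∈ K) (v : E) : Icc ⟪p, v⟫ ⟪q, v⟫ ⊆ (⟪·, v⟫) '' K :=
  fun _ ht => hK.isPreconnected.intermediate_value hp hq (by fun_prop) ht

theorem IsCompact.image_inner_slice {K : Set E} (hK : IsCompact K) (v w : E) (t : ℝ) :
    IsCompact ((⟪·, w⟫) '' (K ∩ {x | ⟪x, v⟫ = t})) :=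
  (hK.inter_right (isClosed_eq (by fun_prop) continuous_const)).image (by fun_prop)

def sliceArgmax (K : Set E) (v w : E) : Set E :=
  {x ∈ K | ∀ z ∈ K, ⟪z, v⟫ = ⟪x, v⟫ → ⟪z, w⟫ ≤ ⟪x, w⟫}

noncomputable def sliceSup (K : Set E) (v w : E) (t : ℝ) : ℝ :=
  sSup ((⟪·, w⟫) '' (K ∩ {x | ⟪x, v⟫ = t}))

variable {K : Set E} {v w : E}

theorem sliceArgmax_subset_frontier (hw : w ≠ 0) (hwv : ⟪w, v⟫ = 0) :
    sliceArgmax K v w ⊆ frontier K := by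
  rintro x ⟨hx, hmax⟩
  refine mem_frontier_of_forall_add_smul_notMem (w := w) hx fun t ht hxt => ?_
  have h := hmax _ hxt (by simp [inner_add_left, real_inner_smul_left, hwv])
  rw [inner_add_left, real_inner_smul_left, real_inner_self_eq_norm_sq] at h
  have : 0 < ‖w‖ := norm_pos_iff.2 hw
  have : 0 < t * ‖w‖ ^ 2 := by positivity
  linarith

theorem inner_le_sliceSup (hK : IsCompact K) {x : E} (hx : x ∈ K) :
    ⟪x, w⟫ ≤ sliceSup K v w ⟪x, v⟫ :=
  le_csSup (hK.image_inner_slice v w _).bddAbove ⟨x, ⟨hx, rfl⟩, rfl⟩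

theorem exists_inner_eq_sliceSup (hK : IsCompact K) {t : ℝ} (ht : t ∈ (⟪·, v⟫) '' K) :
    ∃ z ∈ K, ⟪z, v⟫ = t ∧ ⟪z, w⟫ = sliceSup K v w t := by
  obtain ⟨x, hx, rfl⟩ := ht
  obtain ⟨z, ⟨hz, hzv⟩, hzw⟩ :=
    (hK.image_inner_slice v w _).sSup_mem ⟨_, x, ⟨hx, rfl⟩, rfl⟩
  exact ⟨z, hz, hzv, hzw⟩

theorem concaveOn_sliceSup (hKc : IsCompact K) (hK : Convex ℝ K) {p q : E} (hp : p ∈ K)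
    (hq : q ∈ K) : ConcaveOn ℝ (Icc ⟪p, v⟫ ⟪q, v⟫) (sliceSup K v w) := by
  refine ⟨convex_Icc _ _, fun s hs t ht a b ha hb hab => ?_⟩
  obtain ⟨x, hx, rfl, hxw⟩ :=
    exists_inner_eq_sliceSup (w := w) hKc (hK.Icc_inner_subset_image hp hq v hs)
  obtain ⟨y, hy, rfl, hyw⟩ :=
    exists_inner_eq_sliceSup (w := w) hKc (hK.Icc_inner_subset_image hp hq v ht)
  have h := inner_le_sliceSup (v := v) (w := w) hKc (hK hx hy ha hb hab)
  simpa [inner_add_left, real_inner_smul_left, ← hxw, ← hyw] using h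

theorem continuousOn_sliceSup (hKc : IsCompact K) (hK : Convex ℝ K) {p q : E} (hp : p ∈ K)
    (hq : q ∈ K) : ContinuousOn (sliceSup K v w) (Ioo ⟪p, v⟫ ⟪q, v⟫) := by
  simpa only [interior_Icc] using (concaveOn_sliceSup (w := w) hKc hK hp hq).continuousOn_interior

end InnerProductSpace

namespace Orientation

variable {E : Type*} [NormedAddCommGroup E] [InnerProductSpace ℝ E] [Fact (finrank ℝ E = 2)]
  (o : Orientation ℝ E (Fin 2)) {K : Set E} {v : E}

local notation "J" => o.rightAngleRotation

theorem eq_of_inner_eq_of_inner_rightAngleRotation_eq (hv : v ≠ 0) {x y : E}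
    (h₁ : ⟪x, v⟫ = ⟪y, v⟫) (h₂ : ⟪x, J v⟫ = ⟪y, J v⟫) : x = y := by
  have key := o.inner_sq_add_areaForm_sq v (x - y)
  rw [← o.inner_rightAngleRotation_left, inner_sub_right, inner_sub_right, real_inner_comm x,
    real_inner_comm y, h₁, real_inner_comm x, real_inner_comm y, h₂] at key
  have : ‖x - y‖ ^ 2 = 0 := by
    simpa [norm_ne_zero_iff.2 hv] using key.symm
  simpa [sub_eq_zero] using this

theorem mem_of_inner_rightAngleRotation_mem_Icc (hK : Convex ℝ K) (hv : v ≠ 0) {p q x : E}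
    (hp : p ∈ K) (hq : q ∈ K) (hpx : ⟪p, v⟫ = ⟪x, v⟫) (hqx : ⟪q, v⟫ = ⟪x, v⟫)
    (hx : ⟪x, J v⟫ ∈ Icc ⟪p, J v⟫ ⟪q, J v⟫) : x ∈ K := by
  obtain ⟨m, hm, hmx⟩ := (convex_segment p q).isPreconnected.intermediate_value
    (left_mem_segment ℝ p q) (right_mem_segment ℝ p q) (f := (⟪·, J v⟫)) (by fun_prop) hx
  have hmv : ⟪m, v⟫ = ⟪x, v⟫ := by
    obtain ⟨a, b, -, -, hab, rfl⟩ := hm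
    simp [inner_add_left, real_inner_smul_left, hpx, hqx, ← add_mul, hab]
  rw [← o.eq_of_inner_eq_of_inner_rightAngleRotation_eq hv hmv hmx]
  exact hK.segment_subset hp hq hm

theorem mem_segment_of_inner_rightAngleRotation_eq {p q x : E} (hpq : ⟪p, v⟫ < ⟪q, v⟫)
    (hpx : ⟪p, v⟫ ≤ ⟪x, v⟫) (hxq : ⟪x, v⟫ ≤ ⟪q, v⟫) (hx : ⟪x, J (q - p)⟫ = ⟪p, J (q - p)⟫) :
    x ∈ segment ℝ p q := by
  set d := q - p
  have hd0 : d ≠ 0 := fun h => by simp [sub_eq_zero.1 h] at hpq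
  set s := ⟪x - p, d⟫ / ‖d‖ ^ 2
  have hxs : x = p + s • d := by
    refine o.eq_of_inner_eq_of_inner_rightAngleRotation_eq hd0 ?_ ?_
    · have : ‖d‖ ^ 2 ≠ 0 := by positivity
      simp only [s, inner_add_left, real_inner_smul_left, real_inner_self_eq_norm_sq,
        inner_sub_left]
      field_simp
      ring
    · simp [hx, inner_add_left]
  have hxv : ⟪x, v⟫ = ⟪p, v⟫ + s * ⟪d, v⟫ := by
    rw [hxs, inner_add_left, real_inner_smul_left]
  have hdv : ⟪d, v⟫ = ⟪q, v⟫ - ⟪p, v⟫ := inner_sub_left q p v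
  have hs0 : 0 ≤ s := by nlinarith
  have hs1 : s ≤ 1 := by nlinarith
  rw [segment_eq_image']
  exact ⟨s, ⟨hs0, hs1⟩, hxs.symm⟩

theorem mem_interior_of_inner_lt (hKc : IsCompact K) (hK : Convex ℝ K) (hv : v ≠ 0)
    {y r p q x : E} (hy : y ∈ K) (hr : r ∈ K) (hp : p ∈ K) (hq : q ∈ K)
    (hyx : ⟪y, v⟫ < ⟪x, v⟫) (hxr : ⟪x, v⟫ < ⟪r, v⟫) (hpx : ⟪p, v⟫ = ⟪x, v⟫)
    (hqx : ⟪q, v⟫ = ⟪x, v⟫) (hpx' : ⟪p, J v⟫ < ⟪x, J v⟫) (hxq' : ⟪x, J v⟫ < ⟪q, J v⟫) :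
    x ∈ interior K := by
  set lo : ℝ → ℝ := fun t => -sliceSup K v (-J v) t
  set hi : ℝ → ℝ := sliceSup K v (J v)
  set U : Set E := {z | ⟪z, v⟫ ∈ Ioo ⟪y, v⟫ ⟪r, v⟫} ∩
    (fun z => (⟪z, J v⟫ - lo ⟪z, v⟫, hi ⟪z, v⟫ - ⟪z, J v⟫)) ⁻¹' (Ioi 0 ×ˢ Ioi 0)
  have hUopen : IsOpen U := by
    refine ContinuousOn.isOpen_inter_preimage ?_ (isOpen_Ioo.preimage (by fun_prop))
      (isOpen_Ioi.prod isOpen_Ioi)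
    have hcomp (w : E) : ContinuousOn (fun z => sliceSup K v w ⟪z, v⟫)
        {z | ⟪z, v⟫ ∈ Ioo ⟪y, v⟫ ⟪r, v⟫} :=
      (continuousOn_sliceSup hKc hK hy hr).comp (by fun_prop) fun _ hz => hz
    exact ((continuousOn_id.inner continuousOn_const).sub (hcomp _).neg).prodMk
      ((hcomp _).sub (continuousOn_id.inner continuousOn_const))
  have hUK : U ⊆ K := by
    rintro z ⟨hzI, hzlo, hzhi⟩
    have hz := hK.Icc_inner_subset_image hy hr v (Ioo_subset_Icc_self hzI)
    obtain ⟨z₁, hz₁, hz₁v, hz₁w⟩ := exists_inner_eq_sliceSup (w := -J v) hKc hz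
    obtain ⟨z₂, hz₂, hz₂v, hz₂w⟩ := exists_inner_eq_sliceSup (w := J v) hKc hz
    refine o.mem_of_inner_rightAngleRotation_mem_Icc hK hv hz₁ hz₂ hz₁v hz₂v ⟨?_, ?_⟩
    · simp only [inner_neg_right] at hz₁w
      simp only [lo, mem_Ioi, sub_pos] at hzlo
      linarith
    · simp only [hi, mem_Ioi, sub_pos] at hzhi
      linarith
  refine interior_maximal hUK hUopen ⟨⟨hyx, hxr⟩, ?_, ?_⟩
  · have h := inner_le_sliceSup (v := v) (w := -J v) hKc hp
    simp only [inner_neg_right, hpx] at h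
    simp only [lo, mem_Ioi, sub_pos]
    linarith
  · have h := inner_le_sliceSup (v := v) (w := J v) hKc hq
    simp only [hqx] at h
    simp only [hi, mem_Ioi, sub_pos]
    linarith

theorem mem_sliceArgmax_or_of_mem_frontier (hKc : IsCompact K) (hK : Convex ℝ K) (hv : v ≠ 0)
    {y r x : E} (hy : y ∈ K) (hr : r ∈ K) (hyx : ⟪y, v⟫ < ⟪x, v⟫) (hxr : ⟪x, v⟫ < ⟪r, v⟫)
    (hx : x ∈ frontier K) : x ∈ sliceArgmax K v (J v) ∨ x ∈ sliceArgmax K v (-J v) := by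
  have hxK : x ∈ K := hKc.isClosed.frontier_subset hx
  by_contra h
  simp only [sliceArgmax, mem_ofPred_eq, hxK, true_and, inner_neg_right, neg_le_neg_iff,
    not_or, not_forall, not_le, exists_prop] at h
  obtain ⟨⟨q, hq, hqx, hxq⟩, ⟨p, hp, hpx, hpx'⟩⟩ := h
  exact hx.2 (o.mem_interior_of_inner_lt hKc hK hv hy hr hp hq hyx hxr hpx hqx hpx' hxq)

noncomputable def sliceGraph (K : Set E) (v : E) (t : ℝ) : E :=
  t • v + sliceSup K v (J v) t • J v

theorem inner_sliceGraph (hv : ‖v‖ = 1) (t : ℝ) : ⟪o.sliceGraph K v t, v⟫ = t := by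
  simp [sliceGraph, inner_add_left, real_inner_smul_left, hv]

theorem inner_sliceGraph_rightAngleRotation (hv : ‖v‖ = 1) (t : ℝ) :
    ⟪o.sliceGraph K v t, J v⟫ = sliceSup K v (J v) t := by
  simp [sliceGraph, inner_add_left, hv]

theorem sliceGraph_mem_sliceArgmax (hv : ‖v‖ = 1) (hKc : IsCompact K) {t : ℝ}
    (ht : t ∈ (⟪·, v⟫) '' K) : o.sliceGraph K v t ∈ sliceArgmax K v (J v) := by
  have hv0 : v ≠ 0 := norm_ne_zero_iff.1 (by simp [hv])
  obtain ⟨z, hz, hzv, hzw⟩ := exists_inner_eq_sliceSup (w := J v) hKc ht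
  obtain rfl : z = o.sliceGraph K v t := o.eq_of_inner_eq_of_inner_rightAngleRotation_eq hv0
    (by rw [hzv, o.inner_sliceGraph hv]) (by rw [hzw, o.inner_sliceGraph_rightAngleRotation hv])
  refine ⟨hz, fun z' hz' hz'v => ?_⟩
  rw [hzw, ← hzv, ← hz'v]
  exact inner_le_sliceSup hKc hz'

theorem sliceGraph_inner_of_mem_sliceArgmax (hv : ‖v‖ = 1) (hKc : IsCompact K) {x : E}
    (hx : x ∈ sliceArgmax K v (J v)) : o.sliceGraph K v ⟪x, v⟫ = x := by
  have hv0 : v ≠ 0 := norm_ne_zero_iff.1 (by simp [hv])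
  obtain ⟨z, hz, hzv, hzw⟩ := exists_inner_eq_sliceSup (w := J v) hKc ⟨x, hx.1, rfl⟩
  refine o.eq_of_inner_eq_of_inner_rightAngleRotation_eq hv0 (o.inner_sliceGraph hv _) ?_
  rw [o.inner_sliceGraph_rightAngleRotation hv]
  exact le_antisymm (hzw ▸ hx.2 z hz hzv) (inner_le_sliceSup hKc hx.1)

theorem sliceGraph_image_subset (hKc : IsCompact K) (hK : Convex ℝ K) (hv : ‖v‖ = 1)
    {β : ℝ} {y r : E} (hy : y ∈ K) (hyβ : ⟪y, v⟫ ≤ β) (hr : r ∈ K) :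
    o.sliceGraph K v '' Ico β ⟪r, v⟫ ⊆ frontier K ∩ {x | β ≤ ⟪x, v⟫} := by
  rintro _ ⟨t, ht, rfl⟩
  refine ⟨sliceArgmax_subset_frontier ?_ (o.inner_rightAngleRotation_self v)
    (o.sliceGraph_mem_sliceArgmax hv hKc
      (hK.Icc_inner_subset_image hy hr v ⟨hyβ.trans ht.1, ht.2.le⟩)), ?_⟩
  · simp [← norm_ne_zero_iff, hv]
  · show β ≤ _
    rw [o.inner_sliceGraph hv]
    exact ht.1

theorem isPreconnected_sliceGraph_image_union (hKc : IsCompact K) (hK : Convex ℝ K)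
    (hv : ‖v‖ = 1) {β : ℝ} {y r : E} (hy : y ∈ K) (hyβ : ⟪y, v⟫ < β) (hr : r ∈ K)
    (hrmax : ∀ x ∈ K, ⟪x, v⟫ ≤ ⟪r, v⟫) :
    IsPreconnected (o.sliceGraph K v '' Ico β ⟪r, v⟫ ∪ (K ∩ {x | ⟪x, v⟫ = ⟪r, v⟫})) := by
  have hTop := (hK.inter (convex_hyperplane (f := (⟪·, v⟫))
    ⟨fun x y => inner_add_left x y v, fun a x => real_inner_smul_left x v a⟩ ⟪r, v⟫)).isPreconnected
  rcases le_or_gt ⟪r, v⟫ β with hrβ | hβr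
  · simpa [Ico_eq_empty_of_le hrβ] using hTop
  set A := o.sliceGraph K v '' Ico β ⟪r, v⟫
  have hAK : A ⊆ K := fun x hx =>
    hKc.isClosed.frontier_subset (o.sliceGraph_image_subset hKc hK hv hy hyβ.le hr hx).1
  have hA : IsPreconnected A := by
    refine isPreconnected_Ico.image _ ((continuousOn_id.smul continuousOn_const).add
      (ContinuousOn.smul ?_ continuousOn_const))
    exact (continuousOn_sliceSup hKc hK hy hr).mono fun t ht => ⟨hyβ.trans_le ht.1, ht.2⟩
  -- `sliceSup` may jump at the top level, so the graph is joined to the top face through a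
  -- point of its closure: one of maximal level.
  have hclK : closure A ⊆ K := closure_minimal hAK hKc.isClosed
  obtain ⟨p, hpA, hpmax⟩ := (hKc.of_isClosed_subset isClosed_closure hclK).exists_isMaxOn
    ⟨_, subset_closure (mem_image_of_mem _ ⟨le_rfl, hβr⟩)⟩
    (by fun_prop : Continuous (⟪·, v⟫)).continuousOn
  refine hA.union_of_mem_closure hTop hpA ⟨hclK hpA, le_antisymm (hrmax _ (hclK hpA)) ?_⟩
  refine le_of_forall_lt_imp_le_of_dense fun t ht => ?_
  calc t ≤ max t β := le_max_left t β
    _ = ⟪o.sliceGraph K v (max t β), v⟫ := (o.inner_sliceGraph hv _).symm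
    _ ≤ ⟪p, v⟫ := hpmax (subset_closure (mem_image_of_mem _ ⟨le_max_right t β, max_lt ht hβr⟩))

end Orientation

section TwoDim

variable {E : Type*} [NormedAddCommGroup E] [InnerProductSpace ℝ E] [Fact (finrank ℝ E = 2)]

theorem isPreconnected_frontier_inter_halfspace {K : Set E} (hKc : IsCompact K)
    (hK : Convex ℝ K) {v : E} (hv : ‖v‖ = 1) {β : ℝ} {y : E} (hy : y ∈ K)
    (hyβ : ⟪y, v⟫ < β) : IsPreconnected (frontier K ∩ {x | β ≤ ⟪x, v⟫}) := by
  have : FiniteDimensional ℝ E := .of_fact_finrank_eq_two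
  let o : Orientation ℝ E (Fin 2) := (finBasisOfFinrankEq ℝ E Fact.out).orientation
  have hv0 : v ≠ 0 := norm_ne_zero_iff.1 (by simp [hv])
  have hfK : frontier K ⊆ K := hKc.isClosed.frontier_subset
  obtain ⟨r, hr, hrmax⟩ :=
    hKc.exists_isMaxOn ⟨y, hy⟩ (by fun_prop : Continuous (⟪·, v⟫)).continuousOn
  replace hrmax : ∀ x ∈ K, ⟪x, v⟫ ≤ ⟪r, v⟫ := fun x hx => hrmax hx
  rcases lt_or_ge ⟪r, v⟫ β with hrβ | hβr
  · convert isPreconnected_empty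
    refine eq_empty_of_forall_notMem fun x ⟨hx, hxβ⟩ => ?_
    exact absurd (hrmax x (hfK hx)) (not_le.2 (hrβ.trans_le hxβ))
  set Top := K ∩ {x | ⟪x, v⟫ = ⟪r, v⟫}
  suffices frontier K ∩ {x | β ≤ ⟪x, v⟫} = (o.sliceGraph K v '' Ico β ⟪r, v⟫ ∪ Top) ∪
      ((-o).sliceGraph K v '' Ico β ⟪r, v⟫ ∪ Top) by
    rw [this]
    exact (o.isPreconnected_sliceGraph_image_union hKc hK hv hy hyβ hr hrmax).union r
      (Or.inr ⟨hr, rfl⟩) (Or.inr ⟨hr, rfl⟩)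
      ((-o).isPreconnected_sliceGraph_image_union hKc hK hv hy hyβ hr hrmax)
  refine Subset.antisymm ?_ ?_
  · rintro x ⟨hx, hxβ⟩
    rcases (hrmax x (hfK hx)).eq_or_lt with hxr | hxr
    · exact Or.inl (Or.inr ⟨hfK hx, hxr⟩)
    rcases o.mem_sliceArgmax_or_of_mem_frontier hKc hK hv0 hy hr (hyβ.trans_le hxβ) hxr hx
      with h | h
    · exact Or.inl (Or.inl ⟨_, ⟨hxβ, hxr⟩, o.sliceGraph_inner_of_mem_sliceArgmax hv hKc h⟩)
    · rw [← o.rightAngleRotation_neg_orientation] at h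
      exact Or.inr (Or.inl ⟨_, ⟨hxβ, hxr⟩, (-o).sliceGraph_inner_of_mem_sliceArgmax hv hKc h⟩)
  -- For `v = 0` every slice is all of `K`.
  have htop : Top ⊆ frontier K ∩ {x | β ≤ ⟪x, v⟫} := fun x ⟨hxK, hxr⟩ =>
    ⟨sliceArgmax_subset_frontier (v := 0) hv0 (inner_zero_right v)
      ⟨hxK, fun z hz _ => (hrmax z hz).trans_eq hxr.symm⟩, hβr.trans_eq hxr.symm⟩
  exact union_subset (union_subset (o.sliceGraph_image_subset hKc hK hv hy hyβ.le hr) htop)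
    (union_subset ((-o).sliceGraph_image_subset hKc hK hv hy hyβ.le hr) htop)

theorem not_isPreconnected_slab_diff_s4 {K : Set E} (hKb : Bornology.IsBounded K)
    (hK : Convex ℝ K) {v : E} (hv : ‖v‖ = 1) {β γ : ℝ} (hβγ : β ≤ γ) {p q : E} (hp : p ∈ K)
    (hq : q ∈ K) (hpβ : ⟪p, v⟫ < β) (hqγ : γ < ⟪q, v⟫) :
    ¬ IsPreconnected ({x | ⟪x, v⟫ ∈ Icc β γ} \ K) := by
  intro hconn
  have : FiniteDimensional ℝ E := .of_fact_finrank_eq_two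
  let o : Orientation ℝ E (Fin 2) := (finBasisOfFinrankEq ℝ E Fact.out).orientation
  set d := q - p
  have hdv : 0 < ⟪d, v⟫ := by simp only [d, inner_sub_left]; linarith
  set n := o.rightAngleRotation d
  have hline : ∀ x ∈ {x | ⟪x, v⟫ ∈ Icc β γ} \ K, ⟪x, n⟫ ≠ ⟪p, n⟫ :=
    fun x ⟨⟨hxβ, hxγ⟩, hxK⟩ hxn => hxK (hK.segment_subset hp hq
      (o.mem_segment_of_inner_rightAngleRotation_eq (by linarith) (by linarith) (by linarith) hxn))
  obtain ⟨R, hR⟩ := hKb.subset_closedBall 0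
  set φ : ℝ → E := fun t => β • v + t • o.rightAngleRotation v
  have hφn (t : ℝ) : ⟪φ t, n⟫ = β * ⟪v, n⟫ + t * ⟪d, v⟫ := by
    simp [φ, n, inner_add_left, real_inner_comm v d]
  have hφ (t : ℝ) (ht : R < |t|) : φ t ∈ {x | ⟪x, v⟫ ∈ Icc β γ} \ K := by
    have hφv : ⟪φ t, v⟫ = β := by simp [φ, inner_add_left, real_inner_smul_left, hv]
    refine ⟨by simp [hφv, hβγ], fun hφK => ?_⟩
    have hφJ : ⟪φ t, o.rightAngleRotation v⟫ = t := by
      simp [φ, inner_add_left, hv]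
    have h := abs_real_inner_le_norm (φ t) (o.rightAngleRotation v)
    simp only [hφJ, LinearIsometryEquiv.norm_map, hv, mul_one] at h
    have := mem_closedBall_zero_iff.1 (hR hφK)
    linarith
  rcases hconn.mapsTo_Ioi_or_Iio (by fun_prop) hline with h | h
  · obtain ⟨t, htn, htR⟩ := (((tendsto_id.atBot_mul_const hdv).eventually_lt_atBot
      (⟪p, n⟫ - β * ⟪v, n⟫)).and (eventually_lt_atBot (-R))).exists
    have := h (hφ t (lt_abs.2 (Or.inr (by linarith))))
    simp only [mem_Ioi, hφn, id] at this htn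
    linarith
  · obtain ⟨t, htn, htR⟩ := (((tendsto_id.atTop_mul_const hdv).eventually_gt_atTop
      (⟪p, n⟫ - β * ⟪v, n⟫)).and (eventually_gt_atTop R)).exists
    have := h (hφ t (lt_abs.2 (Or.inl htR)))
    simp only [mem_Iio, hφn, id] at this htn
    linarith

theorem isPreconnected_slab_inter_frontier {K : Set E} (hKc : IsCompact K) (hK : Convex ℝ K)
    {v : E} (hv : ‖v‖ = 1) {β γ : ℝ} {y : E} (hy : y ∈ K) (hyS : y ∉ {x | ⟪x, v⟫ ∈ Icc β γ})
    (hconn : IsPreconnected ({x | ⟪x, v⟫ ∈ Icc β γ} \ K)) :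
    IsPreconnected ({x | ⟪x, v⟫ ∈ Icc β γ} ∩ frontier K) := by
  wlog hyβ : ⟪y, v⟫ < β generalizing v β γ
  · have hslab : {x | ⟪x, -v⟫ ∈ Icc (-γ) (-β)} = {x | ⟪x, v⟫ ∈ Icc β γ} := by
      ext x
      simp only [mem_ofPred_eq, mem_Icc, inner_neg_right, neg_le_neg_iff, and_comm]
    rw [← hslab] at hconn ⊢
    refine this (by rwa [norm_neg]) (by rwa [hslab]) hconn ?_
    simp only [mem_ofPred_eq, mem_Icc, not_and_or, not_le] at hyS
    rw [inner_neg_right, neg_lt_neg_iff]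
    exact hyS.resolve_left hyβ
  rcases ({x | ⟪x, v⟫ ∈ Icc β γ} ∩ frontier K).eq_empty_or_nonempty with h | ⟨x₀, hx₀, -⟩
  · rw [h]
    exact isPreconnected_empty
  have hKγ (x : E) (hx : x ∈ K) : ⟪x, v⟫ ≤ γ := not_lt.1 fun hxγ =>
    not_isPreconnected_slab_diff_s4 hKc.isBounded hK hv (hx₀.1.trans hx₀.2) hy hx hyβ hxγ hconn
  convert isPreconnected_frontier_inter_halfspace hKc hK hv hy hyβ using 1
  ext x
  exact ⟨fun ⟨⟨hxβ, _⟩, hx⟩ => ⟨hx, hxβ⟩,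
    fun ⟨hx, hxβ⟩ => ⟨⟨hxβ, hKγ x (hKc.isClosed.frontier_subset hx)⟩, hx⟩⟩

end TwoDim

theorem slab_meets_single_arc_general
    (K : Set (EuclideanSpace ℝ (Fin 2)))
    (hKc : IsCompact K) (hKconv : Convex ℝ K)
    (a c : EuclideanSpace ℝ (Fin 2))
    (b d : EuclideanSpace ℝ (Fin 2))
    (hb : b ∈ K)
    (S : Set (EuclideanSpace ℝ (Fin 2))) (wS : ℝ)
    (hS : IsSlab S wS)
    (hconn : IsPreconnected (S \ K))
    (haS : a ∉ S) (hbS : b ∉ S) (hcS : c ∉ S) (hdS : d ∉ S) :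
    ∃ x : EuclideanSpace ℝ (Fin 2),
      S ∩ frontier K ⊆ connectedComponentIn (frontier K \ {a, b, c, d}) x := by
  have : Fact (finrank ℝ (EuclideanSpace ℝ (Fin 2)) = 2) := ⟨finrank_euclideanSpace_fin⟩
  obtain ⟨v, β, hv, rfl⟩ := hS
  rcases ({x | β ≤ ⟪x, v⟫ ∧ ⟪x, v⟫ ≤ β + wS} ∩ frontier K).eq_empty_or_nonempty
    with h | ⟨x₀, hx₀⟩
  · exact ⟨a, h ▸ empty_subset _⟩
  refine ⟨x₀, (isPreconnected_slab_inter_frontier hKc hKconv hv hb hbS hconn)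
    |>.subset_connectedComponentIn hx₀ fun x ⟨hxS, hx⟩ => ⟨hx, ?_⟩⟩
  rintro (rfl | rfl | rfl | rfl) <;> contradiction

/-- If a slab `S` of width at least the width `w` of `K` intersects `K`, does not
cross `K`, and avoids the four special boundary points `a, b, c, d`, then
`S ∩ ∂K` lies in one of the four boundary arcs determined by `a, b, c, d`
(i.e. in one connected component of `∂K \ {a,b,c,d}`). -/
theorem slab_meets_single_arc
    (K : Set (EuclideanSpace ℝ (Fin 2)))
    (hKc : IsCompact K) (hKconv : Convex ℝ K)
    (w : ℝ) (hw : 0 < w)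
    (u : EuclideanSpace ℝ (Fin 2)) (hu : ‖u‖ = 1) (α : ℝ)
    (hsub : K ⊆ {x : EuclideanSpace ℝ (Fin 2) | α ≤ ⟪x, u⟫ ∧ ⟪x, u⟫ ≤ α + w})
    (hmin : ∀ S' w', IsSlab S' w' → K ⊆ S' → w ≤ w')
    (a c : EuclideanSpace ℝ (Fin 2))
    (ha : a ∈ frontier K) (hc : c ∈ frontier K)
    (hamid : ⟪a, u⟫ = α + w / 2) (hcmid : ⟪c, u⟫ = α + w / 2) (hac : a ≠ c)
    (u' : EuclideanSpace ℝ (Fin 2)) (hu' : ‖u'‖ = 1) (huu' : ⟪u, u'⟫ = 0)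
    (b d : EuclideanSpace ℝ (Fin 2))
    (hb : b ∈ K) (hbmax : ∀ x ∈ K, ⟪x, u'⟫ ≤ ⟪b, u'⟫)
    (hd : d ∈ K) (hdmin : ∀ x ∈ K, ⟪d, u'⟫ ≤ ⟪x, u'⟫)
    (S : Set (EuclideanSpace ℝ (Fin 2))) (wS : ℝ)
    (hS : IsSlab S wS) (hwS : w ≤ wS)
    (hSK : (S ∩ K).Nonempty) (hconn : IsPreconnected (S \ K))
    (haS : a ∉ S) (hbS : b ∉ S) (hcS : c ∉ S) (hdS : d ∉ S) :
    ∃ x : EuclideanSpace ℝ (Fin 2),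
      S ∩ frontier K ⊆ connectedComponentIn (frontier K \ {a, b, c, d}) x :=
  slab_meets_single_arc_general K hKc hKconv a c b d hb S wS hS hconn haS hbS hcS hdS
end

section
/- There exists a family of 5 pairwise intersecting convex sets in ℝ³ that admits no line transversal, i.e., no single line intersects all 5 sets. -/
/-!
Take the regular tetrahedron `{x | ∀ i, ⟪nᵢ, x⟫ ≤ 3}` with `nᵢ ∈ {±1}³`, its inscribed ball
`closedBall 0 √3` (touching facet `i` at `nᵢ`), and the open facets `Aᵢ`, each with the points
`Pᵢⱼ` added on its edges. Suppose the line `p + t • w` meets the ball and each `Aᵢ`, the latter at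
the parameter `tᵢ`. Everything lies in the tetrahedron and `Aᵢ` on the supporting plane
`⟪nᵢ, x⟫ = 3`, so `tᵢ` is the largest (smallest) parameter of the line inside the tetrahedron when
`⟪nᵢ, w⟫ > 0` (`< 0`), and the whole line lies on that plane when `⟪nᵢ, w⟫ = 0`. Hence whenever
`⟪nⱼ, w⟫` vanishes or has the sign of `⟪nᵢ, w⟫`, the line meets `Aᵢ` on plane `j`, that is at
`Pᵢⱼ`; this cannot happen for two different `j`, as `Pᵢⱼ` lies on no third plane. Pigeonholing
the four signs leaves only the pattern `+ + − −`, say on `i, j | k, l`, and then the ball point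
of the line lies on the segment from `Pₖₗ` to `Pᵢⱼ`. Since these points are close to two
vertices, the segment stays near an edge and misses the ball: both points have a coordinate
equal to `2 > √3`.
-/

open Set Metric Matrix

section

variable {𝕜 E : Type*} [Field 𝕜] [LinearOrder 𝕜] [IsStrictOrderedRing 𝕜]
  [AddCommGroup E] [Module 𝕜 E]

theorem Convex.union_of_subsingleton_inter_level {ι : Type*} {s : Set ι} {C Q : Set E}
    {f : ι → E →ₗ[𝕜] 𝕜} {b : ι → 𝕜} (hC : Convex 𝕜 C) (hf : ∀ j ∈ s, ∀ x ∈ C, f j x ≤ b j)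
    (hQC : Q ⊆ C) (hQ : ∀ j ∈ s, (Q ∩ {x | f j x = b j}).Subsingleton) :
    Convex 𝕜 ({x ∈ C | ∀ j ∈ s, f j x < b j} ∪ Q) := by
  rw [convex_iff_openSegment_subset]
  intro x hx y hy z hz
  have hxC : x ∈ C := hx.elim (·.1) (hQC ·)
  have hyC : y ∈ C := hy.elim (·.1) (hQC ·)
  by_cases hlt : ∀ j ∈ s, f j z < b j
  · exact Or.inl ⟨hC.openSegment_subset hxC hyC hz, hlt⟩
  push Not at hlt
  obtain ⟨j, hj, hbz⟩ := hlt
  obtain ⟨a, c, ha, hc, hac, rfl⟩ := hz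
  have hfx := hf j hj x hxC
  have hfy := hf j hj y hyC
  rw [map_add, map_smul, map_smul, smul_eq_mul, smul_eq_mul] at hbz
  -- a proper convex combination reaches the level only if both endpoints do
  have hb : b j = a * b j + c * b j := by rw [← add_mul, hac, one_mul]
  have hx_eq : f j x = b j :=
    le_antisymm hfx (le_of_mul_le_mul_left (by nlinarith [mul_le_mul_of_nonneg_left hfy hc.le]) ha)
  have hy_eq : f j y = b j :=
    le_antisymm hfy (le_of_mul_le_mul_left (by nlinarith [mul_le_mul_of_nonneg_left hfx ha.le]) hc)
  have hxQ : x ∈ Q := hx.resolve_left fun h => (h.2 j hj).ne hx_eq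
  have hyQ : y ∈ Q := hy.resolve_left fun h => (h.2 j hj).ne hy_eq
  obtain rfl : x = y := hQ j hj ⟨hxQ, hx_eq⟩ ⟨hyQ, hy_eq⟩
  rwa [← add_smul, hac, one_smul]

theorem sub_mul_nonpos_of_map_add_smul (f : E →ₗ[𝕜] 𝕜) {p w : E} {b u v : 𝕜}
    (hu : f (p + u • w) ≤ b) (hv : f (p + v • w) = b) : (u - v) * f w ≤ 0 := by
  simp only [map_add, map_smul, smul_eq_mul] at hu hv
  linarith

theorem map_add_smul_eq_of_sign (f g : E →ₗ[𝕜] 𝕜) {p w : E} {a b u v : 𝕜}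
    (hfu : f (p + u • w) = a) (hfv : f (p + v • w) ≤ a)
    (hgv : g (p + v • w) = b) (hgu : g (p + u • w) ≤ b)
    (hsign : SignType.sign (g w) = 0 ∨ SignType.sign (g w) = SignType.sign (f w)) :
    g (p + u • w) = b := by
  have hf := sub_mul_nonpos_of_map_add_smul f hfv hfu
  have hg := sub_mul_nonpos_of_map_add_smul g hgu hgv
  suffices g w = 0 ∨ u = v by
    rcases this with hw | rfl
    · simpa [hw] using hgv
    · exact hgv
  rcases hsign with h | h
  · exact Or.inl (sign_eq_zero_iff.1 h)
  rcases lt_trichotomy (g w) 0 with hgw | hgw | hgw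
  · have hfw : f w < 0 := sign_eq_neg_one_iff.1 (h ▸ sign_eq_neg_one_iff.2 hgw)
    exact Or.inr (le_antisymm (by nlinarith) (by nlinarith))
  · exact Or.inl hgw
  · have hfw : 0 < f w := sign_eq_one_iff.1 (h ▸ sign_eq_one_iff.2 hgw)
    exact Or.inr (le_antisymm (by nlinarith) (by nlinarith))

theorem add_smul_mem_segment (p w : E) {u s v : 𝕜} (hus : u ≤ s) (hsv : s ≤ v) :
    p + s • w ∈ segment 𝕜 (p + u • w) (p + v • w) := by
  obtain ⟨a, b, ha, hb, hab, rfl⟩ := Icc_subset_segment (𝕜 := 𝕜) ⟨hus, hsv⟩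
  refine ⟨a, b, ha, hb, hab, ?_⟩
  linear_combination (norm := module) hab • p

end

set_option maxRecDepth 100000 in
set_option synthInstance.maxSize 1000 in
theorem SignType.exists_two_pos_two_neg (σ : Fin 4 → SignType)
    (h : ∀ i j k, i ≠ j → i ≠ k → j ≠ k → (σ j = 0 ∨ σ j = σ i) → (σ k = 0 ∨ σ k = σ i) → False) :
    ∃ i j k l, i ≠ j ∧ k ≠ l ∧ σ i = 1 ∧ σ j = 1 ∧ σ k = -1 ∧ σ l = -1 := by
  revert σ
  decide

def intVec {n : ℕ} (v : Fin n → ℤ) : EuclideanSpace ℝ (Fin n) := WithLp.toLp 2 (fun m => (v m : ℝ))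

@[simp] theorem intVec_apply {n : ℕ} (v : Fin n → ℤ) (m : Fin n) : intVec v m = v m := rfl

theorem inner_intVec {n : ℕ} (u v : Fin n → ℤ) :
    inner ℝ (intVec u) (intVec v) = ((u ⬝ᵥ v : ℤ) : ℝ) := by
  simp [PiLp.inner_apply, dotProduct, mul_comm]

local notation "E³" => EuclideanSpace ℝ (Fin 3)

namespace Tetrahedron

def normal : Fin 4 → Fin 3 → ℤ := ![![-1, -1, -1], ![-1, 1, 1], ![1, -1, 1], ![1, 1, -1]]

/-- `edgePoint i j` lies on the edge shared by facets `i` and `j`, one sixth of the way from the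
vertex `-3 • normal m`, `m` the least index outside `{i, j}`, to the other end. The diagonal is
junk. -/
def edgePoint : Fin 4 → Fin 4 → Fin 3 → ℤ :=
  ![![0, ![-3, 2, -2], ![2, -3, -2], ![2, -2, -3]],
    ![![-3, 2, -2], 0, ![2, 2, 3], ![2, 3, 2]],
    ![![2, -3, -2], ![2, 2, 3], 0, ![3, 2, 2]],
    ![![2, -2, -3], ![2, 3, 2], ![3, 2, 2], 0]]

noncomputable def level (i : Fin 4) : E³ →ₗ[ℝ] ℝ := innerₗ E³ (intVec (normal i))

def tetrahedron : Set E³ := ⋂ j, {x | level j x ≤ 3}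

def closedFacet (i : Fin 4) : Set E³ := {x ∈ tetrahedron | level i x = 3}

def openFacet (i : Fin 4) : Set E³ :=
  {x ∈ closedFacet i | ∀ j ∈ ({i}ᶜ : Set (Fin 4)), level j x < 3}

def edgePoints (i : Fin 4) : Set E³ := {x | ∃ j ≠ i, x = intVec (edgePoint i j)}

def augmentedFacet (i : Fin 4) : Set E³ := openFacet i ∪ edgePoints i

/-- The distance from `0` to each facet plane is `3 / ‖normal i‖ = √3`. -/
def inball : Set E³ := closedBall 0 √3

theorem normal_dotProduct_normal_self (i : Fin 4) : normal i ⬝ᵥ normal i = 3 := by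
  revert i; decide

theorem normal_dotProduct_normal_of_ne {i j : Fin 4} (h : i ≠ j) : normal i ⬝ᵥ normal j = -1 := by
  revert i j; decide

theorem edgePoint_comm (i j : Fin 4) : edgePoint i j = edgePoint j i := by
  revert i j; decide

theorem normal_dotProduct_edgePoint_self {i j : Fin 4} (h : i ≠ j) :
    normal i ⬝ᵥ edgePoint i j = 3 := by
  revert i j; decide

theorem normal_dotProduct_edgePoint_lt {i j k : Fin 4} (hi : k ≠ i) (hj : k ≠ j) :
    normal k ⬝ᵥ edgePoint i j < 3 := by
  revert i j k; decide

set_option synthInstance.maxSize 1000 in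
theorem exists_edgePoint_apply_eq_two {i j k l : Fin 4} (hij : i ≠ j) (hkl : k ≠ l) (hik : i ≠ k)
    (hil : i ≠ l) (hjk : j ≠ k) (hjl : j ≠ l) :
    ∃ m, edgePoint i j m = 2 ∧ edgePoint k l m = 2 := by
  revert i j k l
  decide

theorem level_intVec (i : Fin 4) (v : Fin 3 → ℤ) : level i (intVec v) = (normal i ⬝ᵥ v : ℤ) :=
  inner_intVec _ _

theorem level_intVec_normal (i j : Fin 4) :
    level j (intVec (normal i)) = if j = i then 3 else -1 := by
  rw [level_intVec]
  split_ifs with h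
  · simp [h, normal_dotProduct_normal_self]
  · simp [normal_dotProduct_normal_of_ne h]

theorem norm_intVec_normal (i : Fin 4) : ‖intVec (normal i)‖ = √3 := by
  rw [norm_eq_sqrt_real_inner, inner_intVec, normal_dotProduct_normal_self, Int.cast_ofNat]

theorem level_le_of_mem_inball {x : E³} (hx : x ∈ inball) (i : Fin 4) : level i x ≤ 3 :=
  calc level i x = inner ℝ (intVec (normal i)) x := rfl
    _ ≤ ‖intVec (normal i)‖ * ‖x‖ := real_inner_le_norm _ _
    _ ≤ √3 * √3 := by
      rw [norm_intVec_normal]; gcongr; simpa [inball] using hx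
    _ = 3 := Real.mul_self_sqrt (by norm_num)

theorem intVec_normal_mem_openFacet (i : Fin 4) : intVec (normal i) ∈ openFacet i := by
  refine ⟨⟨mem_iInter.2 fun j => ?_, ?_⟩, fun j hj => ?_⟩ <;>
    simp only [mem_ofPred_eq, level_intVec_normal]
  · split_ifs <;> norm_num
  · simp
  · norm_num [mem_compl_singleton_iff.1 hj]

theorem intVec_edgePoint_mem_closedFacet {i j : Fin 4} (h : j ≠ i) :
    intVec (edgePoint i j) ∈ closedFacet i := by
  refine ⟨mem_iInter.2 fun k => ?_, by simp [level_intVec, normal_dotProduct_edgePoint_self h.symm]⟩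
  rw [mem_ofPred_eq, level_intVec]
  by_cases hki : k = i
  · simp [hki, normal_dotProduct_edgePoint_self h.symm]
  by_cases hkj : k = j
  · simp [hkj, edgePoint_comm i j, normal_dotProduct_edgePoint_self h]
  exact_mod_cast (normal_dotProduct_edgePoint_lt hki hkj).le

theorem augmentedFacet_subset_closedFacet (i : Fin 4) : augmentedFacet i ⊆ closedFacet i := by
  rintro x (hx | ⟨j, hj, rfl⟩)
  exacts [hx.1, intVec_edgePoint_mem_closedFacet hj]

theorem eq_edgePoint_of_mem_augmentedFacet {i j : Fin 4} (hij : j ≠ i) {x : E³}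
    (hx : x ∈ augmentedFacet i) (hjx : level j x = 3) : x = intVec (edgePoint i j) := by
  rcases hx with hx | ⟨k, hki, rfl⟩
  · exact absurd hjx (hx.2 j hij).ne
  by_contra hne
  have hjk : j ≠ k := fun h => hne (h ▸ rfl)
  rw [level_intVec] at hjx
  exact (normal_dotProduct_edgePoint_lt hij hjk).ne (by exact_mod_cast hjx)

theorem convex_augmentedFacet (i : Fin 4) : Convex ℝ (augmentedFacet i) := by
  have hT : Convex ℝ tetrahedron :=
    convex_iInter fun j => convex_halfSpace_le (level j).isLinear 3
  refine (hT.inter (convex_hyperplane (level i).isLinear 3)).union_of_subsingleton_inter_level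
    (fun j _ x hx => mem_iInter.1 hx.1 j) (fun x hx => ?_) fun j hj x hx y hy => ?_
  · exact augmentedFacet_subset_closedFacet i (Or.inr hx)
  · rw [eq_edgePoint_of_mem_augmentedFacet hj (Or.inr hx.1) hx.2,
      eq_edgePoint_of_mem_augmentedFacet hj (Or.inr hy.1) hy.2]

theorem notMem_inball_of_mem_segment {i j k l : Fin 4} (hij : i ≠ j) (hkl : k ≠ l) (hik : i ≠ k)
    (hil : i ≠ l) (hjk : j ≠ k) (hjl : j ≠ l) {x : E³}
    (hx : x ∈ segment ℝ (intVec (edgePoint i j)) (intVec (edgePoint k l))) : x ∉ inball := by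
  obtain ⟨m, hijm, hklm⟩ := exists_edgePoint_apply_eq_two hij hkl hik hil hjk hjl
  obtain ⟨a, b, -, -, hab, rfl⟩ := hx
  have hm : (a • intVec (edgePoint i j) + b • intVec (edgePoint k l)) m = 2 := by
    simp [hijm, hklm, ← add_mul, hab]
  intro hball
  have := (PiLp.norm_apply_le _ m).trans (mem_closedBall_zero_iff.1 hball)
  rw [hm, Real.norm_two] at this
  exact this.not_gt ((Real.sqrt_lt' two_pos).2 (by norm_num))

theorem false_of_line_meets_inball_and_augmentedFacets {p w : E³} {s : ℝ} {t : Fin 4 → ℝ}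
    (hs : p + s • w ∈ inball) (ht : ∀ i, p + t i • w ∈ augmentedFacet i) : False := by
  set σ : Fin 4 → SignType := fun i => SignType.sign (level i w)
  have hC i := augmentedFacet_subset_closedFacet i (ht i)
  have hT i j : level j (p + t i • w) ≤ 3 := mem_iInter.1 (hC i).1 j
  have hedge i j (hij : i ≠ j) (h : σ j = 0 ∨ σ j = σ i) : p + t i • w = intVec (edgePoint i j) :=
    eq_edgePoint_of_mem_augmentedFacet hij.symm (ht i)
      (map_add_smul_eq_of_sign (level i) (level j) (hC i).2 (hT j i) (hC j).2 (hT i j) h)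
  obtain ⟨i, j, k, l, hij, hkl, hi, hj, hk, hl⟩ := SignType.exists_two_pos_two_neg σ
    fun i j k hij hik hjk hj hk => by
      have h := map_add_smul_eq_of_sign (level i) (level k) (hC i).2 (hT k i) (hC k).2 (hT i k) hk
      rw [hedge i j hij hj, level_intVec] at h
      exact (normal_dotProduct_edgePoint_lt hik.symm hjk.symm).ne (by exact_mod_cast h)
  have hsi : s ≤ t i := by
    have := sub_mul_nonpos_of_map_add_smul (level i) (level_le_of_mem_inball hs i) (hC i).2
    nlinarith [sign_eq_one_iff.1 hi]
  have hks : t k ≤ s := by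
    have := sub_mul_nonpos_of_map_add_smul (level k) (level_le_of_mem_inball hs k) (hC k).2
    nlinarith [sign_eq_neg_one_iff.1 hk]
  have hseg := add_smul_mem_segment p w hks hsi
  rw [hedge i j hij (Or.inr (hj.trans hi.symm)), hedge k l hkl (Or.inr (hl.trans hk.symm))] at hseg
  have hne a b (ha : σ a = -1) (hb : σ b = 1) : a ≠ b := by
    rintro rfl
    simp [ha] at hb
  exact notMem_inball_of_mem_segment hkl hij (hne k i hk hi) (hne k j hk hj) (hne l i hl hi)
    (hne l j hl hj) hseg hs

theorem zero_notMem_augmentedFacet (i : Fin 4) : (0 : E³) ∉ augmentedFacet i := fun h => by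
  simpa using (augmentedFacet_subset_closedFacet i h).2

theorem augmentedFacet_injective : Function.Injective augmentedFacet := by
  intro i j hij
  by_contra hne
  have hmem : intVec (normal i) ∈ augmentedFacet j :=
    hij ▸ Or.inl (intVec_normal_mem_openFacet i)
  have h := (augmentedFacet_subset_closedFacet j hmem).2
  rw [level_intVec_normal, if_neg (Ne.symm hne)] at h
  norm_num at h

theorem intVec_normal_mem_inball (i : Fin 4) : intVec (normal i) ∈ inball := by
  simp [inball, norm_intVec_normal]

theorem augmentedFacet_inter_nonempty (i j : Fin 4) :
    (augmentedFacet i ∩ augmentedFacet j).Nonempty := by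
  rcases eq_or_ne i j with rfl | hij
  · exact ⟨_, Or.inl (intVec_normal_mem_openFacet i), Or.inl (intVec_normal_mem_openFacet i)⟩
  · exact ⟨_, Or.inr ⟨j, hij.symm, rfl⟩, Or.inr ⟨i, hij, by rw [edgePoint_comm]⟩⟩

def family : Fin 5 → Set E³ := Fin.cons inball augmentedFacet

theorem family_injective : Function.Injective family :=
  Fin.cons_injective_iff.2
    ⟨fun ⟨i, hi⟩ => zero_notMem_augmentedFacet i (hi ▸ mem_closedBall_self (by positivity)),
      augmentedFacet_injective⟩

theorem convex_family (a : Fin 5) : Convex ℝ (family a) := by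
  cases a using Fin.cases
  exacts [convex_closedBall _ _, convex_augmentedFacet _]

theorem family_inter_nonempty (a b : Fin 5) : (family a ∩ family b).Nonempty := by
  cases a using Fin.cases <;> cases b using Fin.cases <;>
    simp only [family, Fin.cons_zero, Fin.cons_succ]
  · exact ⟨0, mem_closedBall_self (by positivity), mem_closedBall_self (by positivity)⟩
  · exact ⟨_, intVec_normal_mem_inball _, Or.inl (intVec_normal_mem_openFacet _)⟩
  · exact ⟨_, Or.inl (intVec_normal_mem_openFacet _), intVec_normal_mem_inball _⟩
  · exact augmentedFacet_inter_nonempty _ _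

end Tetrahedron

/-- There exist 5 pairwise intersecting convex sets in ℝ³ with no line
transversal. -/
theorem five_convex_sets_no_line_transversal :
    ∃ A : Fin 5 → Set (EuclideanSpace ℝ (Fin 3)),
      Function.Injective A ∧
      (∀ i, Convex ℝ (A i)) ∧
      (∀ i j, (A i ∩ A j).Nonempty) ∧
      ∀ ℓ : Set (EuclideanSpace ℝ (Fin 3)),
        (∃ p w : EuclideanSpace ℝ (Fin 3), w ≠ 0 ∧
          ℓ = {x : EuclideanSpace ℝ (Fin 3) | ∃ t : ℝ, x = p + t • w}) →
        ∃ i, ℓ ∩ A i = ∅ := by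
  refine ⟨Tetrahedron.family, Tetrahedron.family_injective, Tetrahedron.convex_family,
    Tetrahedron.family_inter_nonempty, ?_⟩
  rintro ℓ ⟨p, w, -, rfl⟩
  by_contra! hmeet
  obtain ⟨_, ⟨s, rfl⟩, hs⟩ := hmeet 0
  have ht i : ∃ t : ℝ, p + t • w ∈ Tetrahedron.augmentedFacet i := by
    obtain ⟨_, ⟨t, rfl⟩, ht⟩ := hmeet i.succ
    exact ⟨t, ht⟩
  choose t ht using ht
  exact Tetrahedron.false_of_line_meets_inball_and_augmentedFacets hs ht
end

section
/- Let F be a finite family of convex sets in ℝ³ whose elements pairwise intersect, and suppose there is a plane P such that the orthogonal projections of at least a β fraction of all triples of F onto P have a common point, for some β > 0. Then there is a constant α(β) > 0 and a line intersecting at least α(β)·|F| members of F. -/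
/-!
Write `n = #F`. Collapsing the direction `u` identifies the plane with `ℝ × ℝ`, and a point of the
plane lying in the projections of many members of `F` gives the line through it parallel to `u`,
which meets all of them; so it suffices to prove the planar fractional Helly theorem, with
`α = min β 1 / 3`. Let each intersecting triple pick the lexicographic minimum `m` of its
intersection. Helly's theorem, applied to the three sets together with the convex half-plane of
points lexicographically below `m`, shows that `m` is already the lexicographic minimum of the
intersection of two of the three sets. Since that minimum is unique, some pair is picked by at least
`#T / C(n, 2)` triples, and its minimum lies in the third member of each of them. The minima exist
once every set is replaced by the convex hull of finitely many witnesses of intersecting triples.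
-/

open Finset Module
open scoped RealInnerProductSpace

theorem Convex.exists_card_eq_finrank_disjoint_biInter {ι 𝕜 E : Type*} [Field 𝕜] [LinearOrder 𝕜]
    [IsStrictOrderedRing 𝕜] [AddCommGroup E] [Module 𝕜 E] [FiniteDimensional 𝕜 E]
    {K : ι → Set E} {s : Finset ι} {H : Set E}
    (hK : ∀ i ∈ s, Convex 𝕜 (K i)) (hH : Convex 𝕜 H) (hs : finrank 𝕜 E ≤ #s)
    (hne : (⋂ i ∈ s, K i).Nonempty) (hdisj : Disjoint (⋂ i ∈ s, K i) H) :
    ∃ τ ⊆ s, #τ = finrank 𝕜 E ∧ Disjoint (⋂ i ∈ τ, K i) H := by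
  classical
  by_contra! hmeet
  let G : Option ι → Set E := fun o => o.elim H K
  have hmem : ∀ (I : Finset (Option ι)) x,
      x ∈ ⋂ o ∈ I, G o ↔ (none ∈ I → x ∈ H) ∧ x ∈ ⋂ i ∈ I.eraseNone, K i := by
    intro I x
    simp [G, Option.forall]
  obtain ⟨x, hx⟩ := Convex.helly_theorem' (𝕜 := 𝕜) (F := G) (s := insertNone s)
    (by rintro (_ | i) hi; exacts [hH, hK i (by simpa using hi)]) <| by
      intro I hI hcard
      have hIs : I.eraseNone ⊆ s := fun i hi => by simpa using hI (mem_eraseNone.1 hi)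
      by_cases hnone : none ∈ I
      · obtain ⟨τ, hIτ, hτs, hτ⟩ := exists_subsuperset_card_eq hIs
          (by rw [card_eraseNone_of_mem hnone]; omega) hs
        obtain ⟨y, hyK, hyH⟩ := Set.not_disjoint_iff.1 (hmeet τ hτs hτ)
        exact ⟨y, (hmem I y).2 ⟨fun _ => hyH, Set.biInter_subset_biInter_left hIτ hyK⟩⟩
      · obtain ⟨y, hy⟩ := hne
        exact ⟨y, (hmem I y).2 ⟨fun h => absurd h hnone, Set.biInter_subset_biInter_left hIs hy⟩⟩
  rw [hmem, eraseNone_insertNone] at hx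
  exact Set.disjoint_left.1 hdisj hx.2 (hx.1 (by simp))

theorem convex_setOf_toLex_lt (m : ℝ × ℝ) : Convex ℝ {x : ℝ × ℝ | toLex x < toLex m} := by
  intro x hx y hy a b ha hb hab
  obtain rfl : b = 1 - a := by linarith
  simp only [Set.mem_ofPred_eq, Prod.Lex.toLex_lt_toLex', Prod.fst_add, Prod.snd_add,
    Prod.smul_fst, Prod.smul_snd, smul_eq_mul] at hx hy ⊢
  obtain ⟨hx₁, hx₂⟩ := hx
  obtain ⟨hy₁, hy₂⟩ := hy
  have hax := mul_nonneg ha (sub_nonneg.2 hx₁)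
  have hby := mul_nonneg hb (sub_nonneg.2 hy₁)
  refine ⟨by linarith, fun h => ?_⟩
  rcases ha.eq_or_lt with rfl | ha
  · simpa using hy₂ (by simpa using h)
  rcases hb.eq_or_lt with hb | hb
  · obtain rfl : a = 1 := by linarith
    simpa using hx₂ (by simpa using h)
  have hx₁' : x.1 = m.1 := by
    have : a * (m.1 - x.1) = 0 := by linarith
    linarith [(mul_eq_zero.1 this).resolve_left ha.ne']
  have hy₁' : y.1 = m.1 := by
    have : (1 - a) * (m.1 - y.1) = 0 := by linarith
    linarith [(mul_eq_zero.1 this).resolve_left hb.ne']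
  nlinarith [mul_lt_mul_of_pos_left (hx₂ hx₁') ha, mul_lt_mul_of_pos_left (hy₂ hy₁') hb]

def IsLexLeast (S : Set (ℝ × ℝ)) (m : ℝ × ℝ) : Prop :=
  m ∈ S ∧ ∀ x ∈ S, toLex m ≤ toLex x

theorem IsLexLeast.unique {S : Set (ℝ × ℝ)} {m m' : ℝ × ℝ} (h : IsLexLeast S m)
    (h' : IsLexLeast S m') : m = m' :=
  toLex.injective <| le_antisymm (h.2 m' h'.1) (h'.2 m h.1)

theorem IsCompact.exists_isLexLeast {S : Set (ℝ × ℝ)} (hS : IsCompact S) (hne : S.Nonempty) :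
    ∃ m, IsLexLeast S m := by
  obtain ⟨x₀, hx₀S, hx₀⟩ := hS.exists_isMinOn hne continuous_fst.continuousOn
  have hslice : IsCompact (S ∩ {x | x.1 = x₀.1}) :=
    hS.inter_right (isClosed_eq continuous_fst continuous_const)
  obtain ⟨m, ⟨hmS, hm₁⟩, hm⟩ :=
    hslice.exists_isMinOn ⟨x₀, hx₀S, rfl⟩ continuous_snd.continuousOn
  refine ⟨m, hmS, fun x hx => Prod.Lex.toLex_le_toLex'.2 ⟨?_, fun h => ?_⟩⟩
  · rw [show m.1 = x₀.1 from hm₁]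
    exact hx₀ hx
  · exact hm ⟨hx, h.symm.trans hm₁⟩

theorem Finset.exists_card_le_mul_card_fiber {α β : Type*} [DecidableEq β] {s : Finset α}
    {t : Finset β} {f : α → β} (hf : ∀ a ∈ s, f a ∈ t) (ht : t.Nonempty) :
    ∃ y ∈ t, #s ≤ #t * #{x ∈ s | f x = y} := by
  obtain ⟨y, hy, hmax⟩ := t.exists_max_image (fun y => #{x ∈ s | f x = y}) ht
  refine ⟨y, hy, ?_⟩
  rw [card_eq_sum_card_fiberwise hf, ← smul_eq_mul]
  exact sum_le_card_nsmul _ _ _ hmax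

theorem Finset.card_le_card_sub_card_of_forall_card_eq_succ {α : Type*} [DecidableEq α]
    {𝒜 : Finset (Finset α)} {s t : Finset α}
    (h : ∀ σ ∈ 𝒜, t ⊆ σ ∧ σ ⊆ s ∧ #σ = #t + 1) : #𝒜 ≤ #s - #t := by
  obtain rfl | ⟨σ, hσ⟩ := 𝒜.eq_empty_or_nonempty
  · simp
  rw [← card_sdiff_of_subset ((h σ hσ).1.trans (h σ hσ).2.1), ← Nat.choose_one_right #(s \ t),
    ← card_powersetCard]
  refine card_le_card_of_injOn (· \ t) (fun ρ hρ => ?_) (fun ρ hρ ρ' hρ' heq => ?_)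
  · obtain ⟨htρ, hρs, hcard⟩ := h ρ hρ
    simp only [mem_coe, mem_powersetCard]
    exact ⟨sdiff_subset_sdiff hρs le_rfl, by rw [card_sdiff_of_subset htρ]; omega⟩
  · rw [← union_sdiff_of_subset (h ρ hρ).1, ← union_sdiff_of_subset (h ρ' hρ').1]
    exact congrArg (t ∪ ·) heq

theorem exists_pair_isLexLeast_mem_biInter {ι : Type*} {K : ι → Set (ℝ × ℝ)} {σ : Finset ι}
    (hK : ∀ i ∈ σ, Convex ℝ (K i)) (hKc : ∀ i ∈ σ, IsCompact (K i)) (hσ : #σ = 3)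
    (hne : (⋂ i ∈ σ, K i).Nonempty) :
    ∃ τ ⊆ σ, #τ = 2 ∧ ∃ q ∈ ⋂ i ∈ σ, K i, IsLexLeast (⋂ i ∈ τ, K i) q := by
  obtain ⟨i₀, hi₀⟩ : σ.Nonempty := by rw [← card_pos, hσ]; norm_num
  have hcompact : IsCompact (⋂ i ∈ σ, K i) :=
    (hKc i₀ hi₀).of_isClosed_subset (isClosed_biInter fun i hi => (hKc i hi).isClosed)
      (Set.biInter_subset_of_mem hi₀)
  obtain ⟨m, hmσ, hm⟩ := hcompact.exists_isLexLeast hne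
  obtain ⟨τ, hτσ, hτ, hdisj⟩ := Convex.exists_card_eq_finrank_disjoint_biInter (𝕜 := ℝ) hK
    (convex_setOf_toLex_lt m) (by simp [hσ]) hne
    (Set.disjoint_left.2 fun x hx hlt => (hm x hx).not_gt hlt)
  refine ⟨τ, hτσ, by simpa using hτ, m, hmσ, Set.biInter_subset_biInter_left hτσ hmσ,
    fun x hx => not_lt.1 fun hlt => Set.disjoint_left.1 hdisj hx hlt⟩

open scoped Classical in
theorem exists_card_le_choose_two_mul_card_mem_of_isCompact {ι : Type*} {K : ι → Set (ℝ × ℝ)}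
    {F : Finset ι} (hK : ∀ i ∈ F, Convex ℝ (K i)) (hKc : ∀ i ∈ F, IsCompact (K i))
    {T : Finset (Finset ι)} (hTF : T ⊆ F.powersetCard 3) (hT : ∀ σ ∈ T, (⋂ i ∈ σ, K i).Nonempty) :
    ∃ q, #T ≤ (#F).choose 2 * (#{i ∈ F | q ∈ K i} - 2) := by
  have hσF : ∀ σ ∈ T, σ ⊆ F ∧ #σ = 3 := fun σ hσ => mem_powersetCard.1 (hTF hσ)
  have hpair : ∀ σ ∈ T, ∃ τ ⊆ σ, #τ = 2 ∧ ∃ q ∈ ⋂ i ∈ σ, K i, IsLexLeast (⋂ i ∈ τ, K i) q :=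
    fun σ hσ => exists_pair_isLexLeast_mem_biInter (fun i hi => hK i ((hσF σ hσ).1 hi))
      (fun i hi => hKc i ((hσF σ hσ).1 hi)) (hσF σ hσ).2 (hT σ hσ)
  choose! τ hτσ hτ q hqσ hq using hpair
  have hmaps : ∀ σ ∈ T, τ σ ∈ F.powersetCard 2 := fun σ hσ =>
    mem_powersetCard.2 ⟨(hτσ σ hσ).trans (hσF σ hσ).1, hτ σ hσ⟩
  obtain rfl | ⟨σ₀, hσ₀⟩ := T.eq_empty_or_nonempty
  · exact ⟨0, by simp⟩
  obtain ⟨τ₀, hτ₀, hfiber⟩ := exists_card_le_mul_card_fiber hmaps ⟨_, hmaps σ₀ hσ₀⟩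
  rw [card_powersetCard] at hfiber
  obtain h | ⟨σ₁, hσ₁⟩ := {σ ∈ T | τ σ = τ₀}.eq_empty_or_nonempty
  · exact ⟨0, hfiber.trans (by simp [h])⟩
  refine ⟨q σ₁, hfiber.trans (Nat.mul_le_mul_left _ ?_)⟩
  rw [← (mem_powersetCard.1 hτ₀).2]
  refine card_le_card_sub_card_of_forall_card_eq_succ fun σ hσ => ?_
  obtain ⟨hσT, rfl⟩ := mem_filter.1 hσ
  obtain ⟨hσ₁T, hτσ₁⟩ := mem_filter.1 hσ₁
  have hqσ₁ : q σ₁ = q σ := (hq σ₁ hσ₁T).unique (hτσ₁ ▸ hq σ hσT)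
  refine ⟨hτσ σ hσT, fun i hi => mem_filter.2 ⟨(hσF σ hσT).1 hi, ?_⟩, ?_⟩
  · rw [hqσ₁]
    exact Set.mem_iInter₂.1 (hqσ σ hσT) i hi
  · rw [(hσF σ hσT).2, hτ σ hσT]

open scoped Classical in
theorem exists_card_le_choose_two_mul_card_mem {ι : Type*} {K : ι → Set (ℝ × ℝ)}
    {F : Finset ι} (hK : ∀ i ∈ F, Convex ℝ (K i))
    {T : Finset (Finset ι)} (hTF : T ⊆ F.powersetCard 3) (hT : ∀ σ ∈ T, (⋂ i ∈ σ, K i).Nonempty) :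
    ∃ q, #T ≤ (#F).choose 2 * (#{i ∈ F | q ∈ K i} - 2) := by
  choose! p hp using hT
  let P i : Set (ℝ × ℝ) := convexHull ℝ ↑({σ ∈ T | i ∈ σ}.image p)
  have hPK : ∀ i ∈ F, P i ⊆ K i := fun i hi => convexHull_min (by
    simp only [coe_image, coe_filter, Set.image_subset_iff]
    exact fun σ hσ => Set.mem_iInter₂.1 (hp σ hσ.1) i hσ.2) (hK i hi)
  obtain ⟨q, hq⟩ := exists_card_le_choose_two_mul_card_mem_of_isCompact
    (fun i _ => convex_convexHull ℝ _) (fun i _ => (finite_toSet _).isCompact_convexHull ℝ)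
    hTF fun σ hσ => ⟨p σ, Set.mem_iInter₂.2 fun i hi =>
      subset_convexHull ℝ _ (mem_image_of_mem p (mem_filter.2 ⟨hσ, hi⟩))⟩
  refine ⟨q, hq.trans (Nat.mul_le_mul_left _ (Nat.sub_le_sub_right (card_le_card ?_) 2))⟩
  exact monotone_filter_right _ fun i hi hq => hPK i hi hq

theorem min_div_three_mul_le_of_mul_choose_le {β : ℝ} (hβ : 0 < β) {n t s : ℕ} (hn : 3 ≤ n)
    (ht : β * n.choose 3 ≤ t) (hts : t ≤ n.choose 2 * (s - 2)) : min β 1 / 3 * n ≤ s := by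
  have hc3 : (0 : ℝ) < n.choose 3 := by exact_mod_cast Nat.choose_pos hn
  have hpascal : (n.choose 3 : ℝ) * 3 = n.choose 2 * (n - 2) := by
    have : (n.choose 3 * 3 : ℕ) = n.choose 2 * (n - 2 : ℕ) := Nat.choose_succ_right_eq n 2
    have := congrArg (Nat.cast (R := ℝ)) this
    push_cast [Nat.cast_sub (by omega : 2 ≤ n)] at this
    exact this
  have hs : 2 ≤ s := by
    by_contra! hs
    have : (t : ℝ) ≤ 0 := by exact_mod_cast hts.trans (by simp [Nat.sub_eq_zero_of_le hs.le])
    nlinarith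
  have hts' : (t : ℝ) ≤ n.choose 2 * (s - 2) := by
    have := Nat.cast_le (α := ℝ) |>.2 hts
    push_cast [Nat.cast_sub hs] at this
    exact this
  have hc2 : (0 : ℝ) < n.choose 2 := by exact_mod_cast Nat.choose_pos (by omega)
  have hn' : (3 : ℝ) ≤ n := by exact_mod_cast hn
  have hβn : β * (n - 2) ≤ 3 * (s - 2) := by
    refine le_of_mul_le_mul_left ?_ hc2
    nlinarith
  have h₁ := min_le_left β 1
  have h₂ := min_le_right β 1
  nlinarith

open scoped Classical in
theorem fractional_helly_plane {ι : Type*} {K : ι → Set (ℝ × ℝ)} {F : Finset ι}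
    (hK : ∀ i ∈ F, Convex ℝ (K i)) {β : ℝ} (hβ : 0 < β) (hF : 3 ≤ #F)
    {T : Finset (Finset ι)} (hTF : T ⊆ F.powersetCard 3) (hTcard : β * (#F).choose 3 ≤ #T)
    (hT : ∀ σ ∈ T, (⋂ i ∈ σ, K i).Nonempty) :
    ∃ q, min β 1 / 3 * #F ≤ #{i ∈ F | q ∈ K i} := by
  obtain ⟨q, hq⟩ := exists_card_le_choose_two_mul_card_mem hK hTF hT
  exact ⟨q, min_div_three_mul_le_of_mul_choose_le hβ hF hTcard hq⟩

theorem exists_surjective_linearMap_ker_eq_span {𝕜 E : Type*} [Field 𝕜] [AddCommGroup E]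
    [Module 𝕜 E] (hE : finrank 𝕜 E = 3) {u : E} (hu : u ≠ 0) :
    ∃ L : E →ₗ[𝕜] 𝕜 × 𝕜, Function.Surjective L ∧ LinearMap.ker L = 𝕜 ∙ u := by
  have : FiniteDimensional 𝕜 E := .of_finrank_eq_succ hE
  have hrank : finrank 𝕜 (E ⧸ 𝕜 ∙ u) = finrank 𝕜 (𝕜 × 𝕜) := by
    have := (𝕜 ∙ u).finrank_quotient_add_finrank
    rw [finrank_span_singleton hu, hE] at this
    simp
    omega
  let e := LinearEquiv.ofFinrankEq _ _ hrank
  refine ⟨e.toLinearMap ∘ₗ (𝕜 ∙ u).mkQ, e.surjective.comp (𝕜 ∙ u).mkQ_surjective, ?_⟩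
  rw [LinearMap.ker_comp, LinearEquiv.ker, Submodule.comap_bot, Submodule.ker_mkQ]

theorem LinearMap.exists_eq_add_smul_of_ker_eq_span {𝕜 E F : Type*} [Field 𝕜] [AddCommGroup E]
    [Module 𝕜 E] [AddCommGroup F] [Module 𝕜 F] {L : E →ₗ[𝕜] F} {u : E}
    (hL : LinearMap.ker L = 𝕜 ∙ u) {a p : E} (h : L a = L p) : ∃ t : 𝕜, a = p + t • u := by
  have : a - p ∈ 𝕜 ∙ u := by rw [← hL, LinearMap.mem_ker, map_sub, h, sub_self]
  obtain ⟨t, ht⟩ := Submodule.mem_span_singleton.1 this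
  exact ⟨t, by rw [ht, add_sub_cancel]⟩

/-- If a `β` fraction of the triples of a pairwise intersecting finite family of
convex sets in ℝ³ have projections (onto a plane with unit normal `u`) with a
common point, then some line meets an `α(β)` fraction of the family. -/
theorem fractional_triples_implies_line_transversal (β : ℝ) (hβ : 0 < β) :
    ∃ α : ℝ, 0 < α ∧
      ∀ F : Finset (Set (EuclideanSpace ℝ (Fin 3))),
        (∀ A ∈ F, Convex ℝ A) →
        (∀ A ∈ F, ∀ B ∈ F, (A ∩ B).Nonempty) →
        ∀ u : EuclideanSpace ℝ (Fin 3), ‖u‖ = 1 →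
        ∀ T ⊆ F.powersetCard 3,
          β * ((F.powersetCard 3).card : ℝ) ≤ T.card →
          (∀ t ∈ T, (⋂ A ∈ t, (fun x => x - ⟪x, u⟫ • u) '' A).Nonempty) →
          ∃ ℓ : Set (EuclideanSpace ℝ (Fin 3)),
            (∃ p w : EuclideanSpace ℝ (Fin 3), w ≠ 0 ∧
              ℓ = {x : EuclideanSpace ℝ (Fin 3) | ∃ t : ℝ, x = p + t • w}) ∧
            ∃ S ⊆ F, α * (F.card : ℝ) ≤ S.card ∧ ∀ A ∈ S, (ℓ ∩ A).Nonempty := by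
  classical
  refine ⟨min β 1 / 3, by positivity, fun F hconv hpair u hu T hTF hTcard hT => ?_⟩
  have hu0 : u ≠ 0 := by rintro rfl; simp at hu
  obtain ⟨L, hLsurj, hLker⟩ :=
    exists_surjective_linearMap_ker_eq_span finrank_euclideanSpace_fin hu0
  suffices ∃ q, min β 1 / 3 * #F ≤ #{A ∈ F | q ∈ L '' A} by
    obtain ⟨q, hq⟩ := this
    obtain ⟨p, rfl⟩ := hLsurj q
    refine ⟨_, ⟨p, u, hu0, rfl⟩, _, filter_subset _ _, hq, fun A hA => ?_⟩
    obtain ⟨a, haA, hap⟩ := (mem_filter.1 hA).2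
    obtain ⟨t, rfl⟩ := LinearMap.exists_eq_add_smul_of_ker_eq_span hLker hap
    exact ⟨_, ⟨t, rfl⟩, haA⟩
  rcases lt_or_ge #F 3 with hF | hF
  · rcases F.eq_empty_or_nonempty with rfl | ⟨A, hA⟩
    · exact ⟨0, by simp⟩
    obtain ⟨a, haA, -⟩ := hpair A hA A hA
    have hS : 1 ≤ #{B ∈ F | L a ∈ L '' B} := card_pos.2 ⟨A, mem_filter.2 ⟨hA, a, haA, rfl⟩⟩
    have hF' : (#F : ℝ) ≤ 2 := by exact_mod_cast (by omega : #F ≤ 2)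
    refine ⟨L a, le_trans ?_ (Nat.one_le_cast.2 hS)⟩
    nlinarith [min_le_right β 1, lt_min hβ one_pos]
  have hLu : L u = 0 := by
    rw [← LinearMap.mem_ker, hLker]
    exact Submodule.mem_span_singleton_self u
  refine fractional_helly_plane (fun A hA => (hconv A hA).linear_image L) hβ hF hTF
    (by rwa [card_powersetCard] at hTcard) fun t ht => ?_
  obtain ⟨y, hy⟩ := hT t ht
  refine ⟨L y, Set.mem_iInter₂.2 fun A hA => ?_⟩
  obtain ⟨a, haA, rfl⟩ := Set.mem_iInter₂.1 hy A hA
  exact ⟨a, haA, by simp [hLu]⟩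
end

section
/- Let K be a nonempty compact convex set in ℝ² of width 0 (i.e., a segment with endpoints x and y, possibly x = y), and let S be a closed slab of positive width with S ∩ K ≠ ∅ and S \ K connected. Then S contains x or S contains y. -/
/-!
Suppose neither endpoint lies in the slab `a ≤ ⟪·, u⟫ ≤ b`. Since the segment meets the slab,
its endpoints lie strictly on opposite sides of it, so the line through `x` and `y` crosses the
slab, and the part of that line inside the slab lies in the segment. Hence the continuous function
`p ↦ ⟪n, p - x⟫`, for a normal `n` of the line, does not vanish on `S \ K`; but points of the slab
just off the segment on either side of the line show that it takes both signs there, which is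
impossible on a preconnected set.
-/

open scoped RealInnerProductSpace
open Module Set Submodule

variable {E : Type*} [NormedAddCommGroup E] [InnerProductSpace ℝ E]

lemma inner_lt_and_lt_of_mem_segment_of_mem_slab {x y p u : E} {a b : ℝ}
    (hp : p ∈ segment ℝ x y) (hpa : a ≤ ⟪p, u⟫) (hpb : ⟪p, u⟫ ≤ b)
    (hx : ¬(a ≤ ⟪x, u⟫ ∧ ⟪x, u⟫ ≤ b)) (hy : ¬(a ≤ ⟪y, u⟫ ∧ ⟪y, u⟫ ≤ b)) :
    (⟪x, u⟫ < a ∧ b < ⟪y, u⟫) ∨ (⟪y, u⟫ < a ∧ b < ⟪x, u⟫) := by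
  have hp' : ⟪p, u⟫ ∈ uIcc ⟪x, u⟫ ⟪y, u⟫ := by
    rw [← segment_eq_uIcc]
    have := image_segment ℝ (innerₗ E u).toAffineMap x y ▸ mem_image_of_mem _ hp
    simpa [real_inner_comm u] using this
  rw [mem_uIcc] at hp'
  push Not at hx hy
  grind

lemma exists_ne_zero_inner_eq_zero [Fact (finrank ℝ E = 2)] {v : E} (hv : v ≠ 0) :
    ∃ n : E, n ≠ 0 ∧ ⟪n, v⟫ = 0 := by
  have hbot : (ℝ ∙ v)ᗮ ≠ ⊥ := by
    intro h
    have := finrank_orthogonal_span_singleton (𝕜 := ℝ) (n := 1) hv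
    rw [h, finrank_bot] at this
    exact zero_ne_one this
  obtain ⟨n, hn, hn0⟩ := exists_mem_ne_zero_of_ne_bot hbot
  exact ⟨n, hn0, by rwa [real_inner_comm, ← mem_orthogonal_singleton_iff_inner_right]⟩

lemma add_smul_sub_mem_segment_of_mem_slab {x y u : E} {a b t : ℝ}
    (hx : ⟪x, u⟫ < a) (hy : b < ⟪y, u⟫) (ha : a ≤ ⟪x + t • (y - x), u⟫)
    (hb : ⟪x + t • (y - x), u⟫ ≤ b) :
    x + t • (y - x) ∈ segment ℝ x y := by
  rw [inner_add_left, real_inner_smul_left, inner_sub_left] at ha hb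
  rw [segment_eq_image']
  refine ⟨t, ⟨?_, ?_⟩, rfl⟩ <;> nlinarith

lemma exists_pos_add_smul_mem_slab {p₀ n u : E} {a b : ℝ} (ha : a < ⟪p₀, u⟫) (hb : ⟪p₀, u⟫ < b) :
    ∃ ε > 0, ∀ c : ℝ, |c| < ε → a ≤ ⟪p₀ + c • n, u⟫ ∧ ⟪p₀ + c • n, u⟫ ≤ b := by
  have hopen : IsOpen {c : ℝ | ⟪p₀ + c • n, u⟫ ∈ Ioo a b} := isOpen_Ioo.preimage (by fun_prop)
  obtain ⟨ε, hε, hball⟩ := Metric.isOpen_iff.1 hopen 0 (by simpa using ⟨ha, hb⟩)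
  refine ⟨ε, hε, fun c hc => ?_⟩
  have hc : ⟪p₀ + c • n, u⟫ ∈ Ioo a b := hball (by simpa using hc)
  exact ⟨hc.1.le, hc.2.le⟩

lemma mem_segment_of_mem_slab_of_inner_sub_eq_zero [Fact (finrank ℝ E = 2)] {x y u n p : E}
    {a b : ℝ} (hx : ⟪x, u⟫ < a) (hy : b < ⟪y, u⟫) (hn : n ≠ 0) (hnxy : ⟪n, y - x⟫ = 0)
    (ha : a ≤ ⟪p, u⟫) (hb : ⟪p, u⟫ ≤ b) (hp : ⟪n, p - x⟫ = 0) :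
    p ∈ segment ℝ x y := by
  have hxy : y - x ≠ 0 := sub_ne_zero.2 (by rintro rfl; linarith)
  obtain ⟨t, ht⟩ := mem_span_singleton.1
    (mem_span_singleton_of_inner_eq_zero_of_inner_eq_zero hn hxy hp hnxy)
  rw [show p = x + t • (y - x) by rw [ht]; abel] at ha hb ⊢
  exact add_smul_sub_mem_segment_of_mem_slab hx hy ha hb

lemma not_isPreconnected_slab_diff_segment [Fact (finrank ℝ E = 2)] {x y u : E} {a b : ℝ}
    (hab : a < b) (hx : ⟪x, u⟫ < a) (hy : b < ⟪y, u⟫) :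
    ¬IsPreconnected ({p : E | a ≤ ⟪p, u⟫ ∧ ⟪p, u⟫ ≤ b} \ segment ℝ x y) := by
  intro hconn
  have hxy : y - x ≠ 0 := sub_ne_zero.2 (by rintro rfl; linarith)
  obtain ⟨n, hn, hnxy⟩ := exists_ne_zero_inner_eq_zero hxy
  have hseg : ∀ p ∈ segment ℝ x y, ⟪n, p - x⟫ = 0 := by
    rw [segment_eq_image']
    rintro _ ⟨t, -, rfl⟩
    simp [inner_smul_right, hnxy]
  obtain ⟨p₀, hp₀, hp₀u⟩ : ∃ p₀ ∈ segment ℝ x y, ⟪p₀, u⟫ = (a + b) / 2 :=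
    (convex_segment x y).isPreconnected.intermediate_value (left_mem_segment ℝ x y)
      (right_mem_segment ℝ x y) (f := fun p => ⟪p, u⟫) (by fun_prop)
      ⟨by linarith, by linarith⟩
  obtain ⟨ε, hε, hslab⟩ := exists_pos_add_smul_mem_slab (n := n)
    (by linarith : a < ⟪p₀, u⟫) (by linarith : ⟪p₀, u⟫ < b)
  have hside (c : ℝ) : ⟪n, p₀ + c • n - x⟫ = c * ‖n‖ ^ 2 := by
    rw [add_sub_right_comm, inner_add_right, hseg p₀ hp₀, inner_smul_right,
      real_inner_self_eq_norm_sq, zero_add]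
  have hmem (c : ℝ) (hc : |c| < ε) (hc0 : c ≠ 0) :
      p₀ + c • n ∈ {p : E | a ≤ ⟪p, u⟫ ∧ ⟪p, u⟫ ≤ b} \ segment ℝ x y := by
    refine ⟨hslab c hc, fun hK => hc0 ?_⟩
    have := hside c ▸ hseg _ hK
    exact (mul_eq_zero.1 this).resolve_right (pow_ne_zero 2 (norm_ne_zero_iff.2 hn))
  obtain ⟨q, ⟨hqS, hqK⟩, hq⟩ := hconn.intermediate_value
    (hmem (-(ε / 2)) (by rw [abs_neg, abs_of_pos (half_pos hε)]; linarith) (by linarith))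
    (hmem (ε / 2) (by rw [abs_of_pos (half_pos hε)]; linarith) (by linarith))
    (f := fun p => ⟪n, p - x⟫) (by fun_prop)
    (show (0 : ℝ) ∈ Icc _ _ by simp only [hside]; constructor <;> nlinarith [norm_nonneg n])
  exact hqK (mem_segment_of_mem_slab_of_inner_sub_eq_zero hx hy hn hnxy hqS.1 hqS.2 hq)

/-- If `K` is a segment `[x,y]` in the plane and `S` is a closed slab of positive
width with `S ∩ K ≠ ∅` and `S \ K` connected, then `S` contains `x` or `y`. -/
theorem slab_meets_segment_endpoint
    (x y : EuclideanSpace ℝ (Fin 2)) (K : Set (EuclideanSpace ℝ (Fin 2)))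
    (hK : K = segment ℝ x y)
    (S : Set (EuclideanSpace ℝ (Fin 2))) (w : ℝ) (hw : 0 < w)
    (hS : ∃ (u : EuclideanSpace ℝ (Fin 2)) (a : ℝ), ‖u‖ = 1 ∧
      S = {p : EuclideanSpace ℝ (Fin 2) | a ≤ ⟪p, u⟫ ∧ ⟪p, u⟫ ≤ a + w})
    (hSK : (S ∩ K).Nonempty) (hconn : IsPreconnected (S \ K)) :
    x ∈ S ∨ y ∈ S := by
  have : Fact (finrank ℝ (EuclideanSpace ℝ (Fin 2)) = 2) := ⟨finrank_euclideanSpace_fin⟩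
  obtain ⟨u, a, -, rfl⟩ := hS
  subst hK
  obtain ⟨p, ⟨hpa, hpb⟩, hp⟩ := hSK
  by_contra! hxy
  rcases inner_lt_and_lt_of_mem_segment_of_mem_slab hp hpa hpb hxy.1 hxy.2 with ⟨hx, hy⟩ | ⟨hy, hx⟩
  · exact not_isPreconnected_slab_diff_segment (by linarith) hx hy hconn
  · exact not_isPreconnected_slab_diff_segment (by linarith) hy hx (segment_symm ℝ x y ▸ hconn)
end
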